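/- arXiv:1906.11291 — 7 statements merged into one kernel-verified Lean document; each statement's English description precedes it below -/
import Mathlib

section
/- (Lemma A11) For every γ ∈ ℝ^J, under complete randomization, n·Var(τ̂ − γᵀτ̂_w) = (V_ττ − V_τw V_ww⁻¹ V_wτ) + (r₁r₀)⁻¹ (γ − γ̃)ᵀ S_w² (γ − γ̃), where γ̃ = V_ww⁻¹ V_wτ. With γ = r₀β₁ + r₁β₀, this is the paper's identity V_ττ(β₁,β₀) = V_ττ(1 − R²_{τ,w}) + (r₁r₀)⁻¹ (γ − γ̃)ᵀ S_w² (γ − γ̃). -/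
/-!
The adjusted statistic `τ̂ − γᵀτ̂_w` is the difference in means of the adjusted outcomes
`Y(z) − wγ`, so Neyman's formula `n·Var(τ̂) = V_ττ` applies to it. As `w` is centered, `V_ττ` of
the adjusted outcomes is `V_ττ − 2γᵀV_wτ + γᵀV_wwγ`, and completing the square around
`γ̃ = V_ww⁻¹V_wτ` gives the identity.

Neyman's formula holds because, up to a constant, `τ̂` is the sample total
`∑_{i ∈ S} (Y_i(1)/n₁ + Y_i(0)/n₀)` of a simple random sample `S` of size `n₁`, whose variance
follows from the inclusion probabilities `P(i ∈ S) = n₁/n` and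
`P(i, j ∈ S) = n₁(n₁ − 1)/(n(n − 1))` for `i ≠ j`.
-/

open Finset Matrix

noncomputable section

/-- The set of possible complete-randomization treatment assignments:
subsets of `{1,…,n}` of size `n₁` (the treated units). -/
def Omega (n n₁ : ℕ) : Finset (Finset (Fin n)) :=
  Finset.powersetCard n₁ Finset.univ

/-- Expectation under complete randomization (uniform over `Omega n n₁`). -/
def crE (n n₁ : ℕ) (f : Finset (Fin n) → ℝ) : ℝ :=
  (∑ s ∈ Omega n n₁, f s) / ((Omega n n₁).card : ℝ)

/-- Variance under complete randomization. -/
def crVar (n n₁ : ℕ) (f : Finset (Fin n) → ℝ) : ℝ :=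
  crE n n₁ fun s => (f s - crE n n₁ f) ^ 2

/-- Covariance under complete randomization. -/
def crCov (n n₁ : ℕ) (f g : Finset (Fin n) → ℝ) : ℝ :=
  crE n n₁ fun s => (f s - crE n n₁ f) * (g s - crE n n₁ g)

/-- Difference-in-means estimator `τ̂` of the average treatment effect. -/
def tauHat (n n₁ n₀ : ℕ) (Y1 Y0 : Fin n → ℝ) (s : Finset (Fin n)) : ℝ :=
  (n₁ : ℝ)⁻¹ * ∑ i, (if i ∈ s then Y1 i else 0)
    - (n₀ : ℝ)⁻¹ * ∑ i, (if i ∈ s then 0 else Y0 i)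

/-- Difference-in-means `τ̂_w` of a covariate vector. -/
def tauHatVec (n n₁ n₀ J : ℕ) (w : Fin n → Fin J → ℝ) (s : Finset (Fin n)) :
    Fin J → ℝ := fun j =>
  (n₁ : ℝ)⁻¹ * ∑ i, (if i ∈ s then w i j else 0)
    - (n₀ : ℝ)⁻¹ * ∑ i, (if i ∈ s then 0 else w i j)

/-- Finite-population mean. -/
def popMean (n : ℕ) (Y : Fin n → ℝ) : ℝ := (n : ℝ)⁻¹ * ∑ i, Y i

/-- Finite-population variance `S²_Y`. -/
def popVar (n : ℕ) (Y : Fin n → ℝ) : ℝ :=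
  ((n : ℝ) - 1)⁻¹ * ∑ i, (Y i - popMean n Y) ^ 2

/-- Finite-population covariance `S_{w,Y}` between centered covariates and an outcome. -/
def covVec (n J : ℕ) (w : Fin n → Fin J → ℝ) (Y : Fin n → ℝ) : Fin J → ℝ := fun j =>
  ((n : ℝ) - 1)⁻¹ * ∑ i, w i j * (Y i - popMean n Y)

/-- Finite-population covariance matrix `S_{w,x}` between two sets of centered covariates. -/
def covMat (n J K : ℕ) (w : Fin n → Fin J → ℝ) (x : Fin n → Fin K → ℝ) :
    Matrix (Fin J) (Fin K) ℝ :=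
  Matrix.of fun j k => ((n : ℝ) - 1)⁻¹ * ∑ i, w i j * x i k

/-- `V_ττ = r₁⁻¹ S²_{Y(1)} + r₀⁻¹ S²_{Y(0)} − S²_τ`. -/
def Vtt (n n₁ n₀ : ℕ) (Y1 Y0 : Fin n → ℝ) : ℝ :=
  ((n₁ : ℝ) / n)⁻¹ * popVar n Y1 + ((n₀ : ℝ) / n)⁻¹ * popVar n Y0
    - popVar n (fun i => Y1 i - Y0 i)

/-- `V_wτ = r₁⁻¹ S_{w,Y(1)} + r₀⁻¹ S_{w,Y(0)}`. -/
def VvecTau (n n₁ n₀ J : ℕ) (w : Fin n → Fin J → ℝ) (Y1 Y0 : Fin n → ℝ) :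
    Fin J → ℝ :=
  ((n₁ : ℝ) / n)⁻¹ • covVec n J w Y1 + ((n₀ : ℝ) / n)⁻¹ • covVec n J w Y0

/-- `V_wx = (r₁ r₀)⁻¹ S_{w,x}` (covariance blocks of the matrix `V`). -/
def Vmat (n n₁ n₀ J K : ℕ) (w : Fin n → Fin J → ℝ) (x : Fin n → Fin K → ℝ) :
    Matrix (Fin J) (Fin K) ℝ :=
  (((n₁ : ℝ) / n) * ((n₀ : ℝ) / n))⁻¹ • covMat n J K w x

open scoped Nat

namespace Finset

variable {α : Type*} [Fintype α] [DecidableEq α]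

/- `P(t ⊆ S) = k(k-1)⋯(k-#t+1) / (n(n-1)⋯(n-#t+1))` for a uniform `k`-subset `S`; in this
multiplied-out form it also holds when `#t > k`, where both sides vanish. -/
theorem card_filter_subset_powersetCard_mul_descFactorial (k : ℕ) (t : Finset α) :
    #{s ∈ powersetCard k univ | t ⊆ s} * (Fintype.card α).descFactorial #t
      = (Fintype.card α).choose k * k.descFactorial #t := by
  rcases le_or_gt #t k with htk | hkt
  · rw [card_filter_powersetCard_subset t univ k (subset_univ t) htk, card_univ,
      Nat.descFactorial_eq_factorial_mul_choose, Nat.descFactorial_eq_factorial_mul_choose]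
    calc _ = (#t)! * ((Fintype.card α).choose #t * (Fintype.card α - #t).choose (k - #t)) := by
          ring
      _ = _ := by rw [← Nat.choose_mul htk]; ring
  · have hempty : {s ∈ powersetCard k (univ : Finset α) | t ⊆ s} = ∅ :=
      filter_eq_empty_iff.mpr fun s hs hts =>
        (card_le_card hts).not_gt ((mem_powersetCard.mp hs).2 ▸ hkt)
    rw [hempty, Nat.descFactorial_eq_zero_iff_lt.mpr hkt]
    simp

theorem card_filter_mem_powersetCard_mul (k : ℕ) (i : α) :
    (#{s ∈ powersetCard k univ | i ∈ s} : ℝ) * Fintype.card α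
      = (Fintype.card α).choose k * k := by
  have h := card_filter_subset_powersetCard_mul_descFactorial k {i}
  simp only [singleton_subset_iff, card_singleton, Nat.descFactorial_one] at h
  exact_mod_cast h

theorem card_filter_pair_mem_powersetCard_mul (k : ℕ) {i j : α} (hij : i ≠ j) :
    (#{s ∈ powersetCard k univ | i ∈ s ∧ j ∈ s} : ℝ)
        * (Fintype.card α * (Fintype.card α - 1))
      = (Fintype.card α).choose k * (k * (k - 1)) := by
  have h := congrArg (Nat.cast (R := ℝ))
    (card_filter_subset_powersetCard_mul_descFactorial k {i, j})
  simp only [insert_subset_iff, singleton_subset_iff, card_pair hij, Nat.cast_mul,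
    Nat.cast_descFactorial_two] at h
  exact h

theorem sum_powersetCard_sum_mul (k : ℕ) (c : α → ℝ) :
    (∑ s ∈ powersetCard k univ, ∑ i ∈ s, c i) * Fintype.card α
      = (Fintype.card α).choose k * k * ∑ i, c i := by
  rw [sum_comm' (t' := univ) (s' := fun i => {s ∈ powersetCard k univ | i ∈ s})
    (by simp), sum_mul, mul_sum]
  refine sum_congr rfl fun i _ => ?_
  rw [sum_const, nsmul_eq_mul, mul_right_comm, card_filter_mem_powersetCard_mul]

theorem sum_powersetCard_sq_sum_mul (k : ℕ) (c : α → ℝ) :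
    (∑ s ∈ powersetCard k univ, (∑ i ∈ s, c i) ^ 2)
        * (Fintype.card α * (Fintype.card α - 1))
      = (Fintype.card α).choose k
          * (k * (k - 1) * (∑ i, c i) ^ 2 + k * (Fintype.card α - k) * ∑ i, c i ^ 2) := by
  set n : ℝ := (Fintype.card α : ℝ)
  set N : ℝ := ((Fintype.card α).choose k : ℝ)
  have hpair : ∀ i j : α,
      (#{s ∈ powersetCard k univ | i ∈ s ∧ j ∈ s} : ℝ) * (n * (n - 1))
        = N * (k * (k - 1)) + if i = j then N * (k * (n - k)) else 0 := by
    intro i j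
    split_ifs with hij
    · subst hij
      simp only [and_self]
      rw [← mul_assoc, card_filter_mem_powersetCard_mul]
      ring
    · rw [card_filter_pair_mem_powersetCard_mul k hij, add_zero]
  have hexpand : ∑ s ∈ powersetCard k univ, (∑ i ∈ s, c i) ^ 2
      = ∑ i, ∑ j, (#{s ∈ powersetCard k univ | i ∈ s ∧ j ∈ s} : ℝ) * (c i * c j) := by
    simp_rw [sq, sum_mul_sum]
    rw [sum_comm' (t' := univ) (s' := fun i => {s ∈ powersetCard k univ | i ∈ s}) (by simp)]
    refine sum_congr rfl fun i _ => ?_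
    rw [sum_comm' (t' := univ) (s' := fun j => {s ∈ {s ∈ powersetCard k univ | i ∈ s} | j ∈ s})
      (by simp)]
    simp only [filter_filter, sum_const, nsmul_eq_mul]
  calc (∑ s ∈ powersetCard k univ, (∑ i ∈ s, c i) ^ 2) * (n * (n - 1))
      = ∑ i, ∑ j, (N * (k * (k - 1)) + if i = j then N * (k * (n - k)) else 0) * (c i * c j) := by
        rw [hexpand, sum_mul]
        refine sum_congr rfl fun i _ => ?_
        rw [sum_mul]
        refine sum_congr rfl fun j _ => ?_
        rw [← hpair]
        ring
    _ = N * (k * (k - 1)) * ∑ i, ∑ j, c i * c j + N * (k * (n - k)) * ∑ i, c i * c i := by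
        simp only [add_mul, sum_add_distrib, ite_mul, zero_mul, sum_ite_eq, mem_univ, if_true,
          mul_sum]
    _ = N * (k * (k - 1) * (∑ i, c i) ^ 2 + k * (n - k) * ∑ i, c i ^ 2) := by
        simp only [← sum_mul_sum, ← sq]
        ring

end Finset

section CompleteRandomization

variable {n k : ℕ}

lemma card_Omega_ne_zero (hk : k ≤ n) : ((Omega n k).card : ℝ) ≠ 0 := by
  rw [Omega, card_powersetCard, card_univ, Fintype.card_fin]
  exact_mod_cast (Nat.choose_pos hk).ne'

lemma crE_add_const (hk : k ≤ n) (f : Finset (Fin n) → ℝ) (b : ℝ) :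
    crE n k (fun s => f s + b) = crE n k f + b := by
  simp only [crE, sum_add_distrib, sum_const, nsmul_eq_mul, add_div,
    mul_div_cancel_left₀ _ (card_Omega_ne_zero hk)]

lemma crVar_add_const (hk : k ≤ n) (f : Finset (Fin n) → ℝ) (b : ℝ) :
    crVar n k (fun s => f s + b) = crVar n k f := by
  simp only [crVar, crE_add_const hk, add_sub_add_right_eq_sub]

lemma crVar_eq_crE_sq_sub (hk : k ≤ n) (f : Finset (Fin n) → ℝ) :
    crVar n k f = crE n k (fun s => f s ^ 2) - crE n k f ^ 2 := by
  have hN := card_Omega_ne_zero hk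
  simp only [crVar, crE, sub_sq, sum_add_distrib, sum_sub_distrib, ← sum_mul, ← mul_sum,
    sum_const, nsmul_eq_mul]
  field_simp
  ring

lemma popVar_eq_sum_sq_sub (Y : Fin n → ℝ) :
    popVar n Y = ((n : ℝ) - 1)⁻¹ * (∑ i, Y i ^ 2 - (∑ i, Y i) ^ 2 / n) := by
  rcases Nat.eq_zero_or_pos n with rfl | hn
  · simp [popVar]
  have hn' : (n : ℝ) ≠ 0 := by positivity
  simp only [popVar, popMean, sub_sq, sum_add_distrib, sum_sub_distrib, ← sum_mul, ← mul_sum,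
    sum_const, card_univ, Fintype.card_fin, nsmul_eq_mul]
  field_simp
  ring

lemma crVar_sum_mem (hn : 2 ≤ n) (hk : k ≤ n) (c : Fin n → ℝ) :
    crVar n k (fun s => ∑ i ∈ s, c i) = k * (n - k) / n * popVar n c := by
  have h1 := sum_powersetCard_sum_mul k c
  have h2 := sum_powersetCard_sq_sum_mul k c
  have hN := card_Omega_ne_zero hk
  have hn0 : (n : ℝ) ≠ 0 := by positivity
  have hn1 : (n : ℝ) - 1 ≠ 0 := by
    have : (2 : ℝ) ≤ n := by exact_mod_cast hn
    linarith
  simp only [Fintype.card_fin] at h1 h2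
  rw [crVar_eq_crE_sq_sub hk, popVar_eq_sum_sq_sub]
  simp only [crE]
  rw [Omega, card_powersetCard, card_univ, Fintype.card_fin] at hN ⊢
  rw [eq_div_of_mul_eq hn0 h1, eq_div_of_mul_eq (mul_ne_zero hn0 hn1) h2]
  field_simp
  ring

end CompleteRandomization

section Neyman

variable {n n₁ n₀ : ℕ}

lemma tauHat_eq_sum_mem_sub (Y1 Y0 : Fin n → ℝ) (s : Finset (Fin n)) :
    tauHat n n₁ n₀ Y1 Y0 s = ∑ i ∈ s, (Y1 i / n₁ + Y0 i / n₀) - (∑ i, Y0 i) / n₀ := by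
  have hcompl : ∑ i, (if i ∈ s then 0 else Y0 i) = ∑ i, Y0 i - ∑ i ∈ s, Y0 i := by
    rw [← Fintype.sum_ite_mem s Y0, ← sum_sub_distrib]
    exact sum_congr rfl fun i _ => by split_ifs <;> ring
  rw [tauHat, hcompl, Fintype.sum_ite_mem, sum_add_distrib, ← sum_div, ← sum_div]
  ring

lemma Vtt_eq_mul_popVar (hsum : n₁ + n₀ = n) (hn₁ : 0 < n₁) (hn₀ : 0 < n₀) (Y1 Y0 : Fin n → ℝ) :
    Vtt n n₁ n₀ Y1 Y0 = n₁ * n₀ * popVar n (fun i => Y1 i / n₁ + Y0 i / n₀) := by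
  have hn : (n : ℝ) = n₁ + n₀ := by exact_mod_cast hsum.symm
  have hn₁' : (n₁ : ℝ) ≠ 0 := by positivity
  have hn₀' : (n₀ : ℝ) ≠ 0 := by positivity
  have hmean_add : popMean n (fun i => Y1 i / n₁ + Y0 i / n₀)
      = popMean n Y1 / n₁ + popMean n Y0 / n₀ := by
    simp only [popMean, sum_add_distrib, ← sum_div]
    ring
  have hmean_sub : popMean n (fun i => Y1 i - Y0 i) = popMean n Y1 - popMean n Y0 := by
    simp only [popMean, sum_sub_distrib]
    ring
  simp only [Vtt, popVar, hmean_add, hmean_sub, mul_sum, ← sum_add_distrib, ← sum_sub_distrib]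
  -- for centered `a, b`: `n₁n₀(a/n₁ + b/n₀)² = (n/n₁)a² + (n/n₀)b² − (a − b)²` once `n = n₁ + n₀`
  refine sum_congr rfl fun i _ => ?_
  rw [hn]
  field_simp
  ring

theorem mul_crVar_tauHat (hsum : n₁ + n₀ = n) (hn₁ : 0 < n₁) (hn₀ : 0 < n₀)
    (Y1 Y0 : Fin n → ℝ) :
    (n : ℝ) * crVar n n₁ (tauHat n n₁ n₀ Y1 Y0) = Vtt n n₁ n₀ Y1 Y0 := by
  have htauHat : tauHat n n₁ n₀ Y1 Y0
      = fun s => ∑ i ∈ s, (Y1 i / n₁ + Y0 i / n₀) + -((∑ i, Y0 i) / n₀) := by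
    ext s
    rw [tauHat_eq_sum_mem_sub, sub_eq_add_neg]
  have hn₀' : (n : ℝ) - n₁ = n₀ := by rw [← hsum]; push_cast; ring
  have hn : (n : ℝ) ≠ 0 := Nat.cast_ne_zero.mpr (by omega)
  rw [htauHat, crVar_add_const (by omega), crVar_sum_mem (by omega) (by omega),
    Vtt_eq_mul_popVar hsum hn₁ hn₀, hn₀']
  field_simp

end Neyman

section Adjustment

variable {n n₁ n₀ J : ℕ}

lemma tauHat_sub (Y1 Y0 Z1 Z0 : Fin n → ℝ) (s : Finset (Fin n)) :
    tauHat n n₁ n₀ Y1 Y0 s - tauHat n n₁ n₀ Z1 Z0 s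
      = tauHat n n₁ n₀ (fun i => Y1 i - Z1 i) (fun i => Y0 i - Z0 i) s := by
  have hsplit : ∀ i, (Y1 i - Z1 i) / n₁ + (Y0 i - Z0 i) / n₀
      = (Y1 i / n₁ + Y0 i / n₀) - (Z1 i / n₁ + Z0 i / n₀) := fun i => by ring
  simp only [tauHat_eq_sum_mem_sub, hsplit, sum_sub_distrib]
  ring

lemma dotProduct_tauHatVec (w : Fin n → Fin J → ℝ) (γ : Fin J → ℝ) (s : Finset (Fin n)) :
    γ ⬝ᵥ tauHatVec n n₁ n₀ J w s = tauHat n n₁ n₀ (of w *ᵥ γ) (of w *ᵥ γ) s := by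
  simp only [dotProduct, tauHatVec, tauHat, mulVec, of_apply, mul_sub, sum_sub_distrib, mul_sum,
    mul_ite, mul_zero, ite_sum_zero, ite_zero_sum]
  congr 1 <;> rw [sum_comm] <;>
    exact sum_congr rfl fun i _ => sum_congr rfl fun j _ => by split_ifs <;> ring

lemma sum_mulVec_eq_zero {w : Fin n → Fin J → ℝ} (hw : ∀ j, ∑ i, w i j = 0) (γ : Fin J → ℝ) :
    ∑ i, (of w *ᵥ γ) i = 0 := by
  simp only [mulVec, dotProduct, of_apply]
  rw [sum_comm]
  simp [← sum_mul, hw]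

lemma popVar_sub_of_sum_eq_zero (Y d : Fin n → ℝ) (hd : ∑ i, d i = 0) :
    popVar n (fun i => Y i - d i)
      = popVar n Y - 2 * (((n : ℝ) - 1)⁻¹ * (d ⬝ᵥ fun i => Y i - popMean n Y))
        + ((n : ℝ) - 1)⁻¹ * (d ⬝ᵥ d) := by
  have hmean : popMean n (fun i => Y i - d i) = popMean n Y := by
    simp [popMean, sum_sub_distrib, hd]
  have hsq : ∀ i, (Y i - d i - popMean n Y) ^ 2
      = (Y i - popMean n Y) ^ 2 - 2 * (d i * (Y i - popMean n Y)) + d i * d i :=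
    fun i => by ring
  simp only [popVar, hmean, hsq, dotProduct, sum_add_distrib, sum_sub_distrib, ← mul_sum]
  ring

lemma covMat_eq_smul {K : ℕ} (w : Fin n → Fin J → ℝ) (x : Fin n → Fin K → ℝ) :
    covMat n J K w x = ((n : ℝ) - 1)⁻¹ • ((of w)ᵀ * of x) := by
  ext j k
  simp [covMat, mul_apply]

lemma covVec_eq_smul (w : Fin n → Fin J → ℝ) (Y : Fin n → ℝ) :
    covVec n J w Y = ((n : ℝ) - 1)⁻¹ • ((of w)ᵀ *ᵥ fun i => Y i - popMean n Y) := by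
  ext j
  simp [covVec, mulVec, dotProduct]

lemma dotProduct_covVec (w : Fin n → Fin J → ℝ) (Y : Fin n → ℝ) (γ : Fin J → ℝ) :
    γ ⬝ᵥ covVec n J w Y = ((n : ℝ) - 1)⁻¹ * ((of w *ᵥ γ) ⬝ᵥ fun i => Y i - popMean n Y) := by
  rw [covVec_eq_smul, dotProduct_smul, dotProduct_mulVec, vecMul_transpose, smul_eq_mul]

lemma dotProduct_covMat_mulVec (w : Fin n → Fin J → ℝ) (γ : Fin J → ℝ) :
    γ ⬝ᵥ (covMat n J J w w *ᵥ γ) = ((n : ℝ) - 1)⁻¹ * ((of w *ᵥ γ) ⬝ᵥ (of w *ᵥ γ)) := by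
  rw [covMat_eq_smul, smul_mulVec, dotProduct_smul, ← mulVec_mulVec, dotProduct_mulVec,
    vecMul_transpose, smul_eq_mul]

lemma Vtt_sub_mulVec (hsum : n₁ + n₀ = n) (hn₁ : 0 < n₁) (hn₀ : 0 < n₀) (Y1 Y0 : Fin n → ℝ)
    {w : Fin n → Fin J → ℝ} (hw : ∀ j, ∑ i, w i j = 0) (γ : Fin J → ℝ) :
    Vtt n n₁ n₀ (fun i => Y1 i - (of w *ᵥ γ) i) (fun i => Y0 i - (of w *ᵥ γ) i)
      = Vtt n n₁ n₀ Y1 Y0 - 2 * (γ ⬝ᵥ VvecTau n n₁ n₀ J w Y1 Y0)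
        + γ ⬝ᵥ (Vmat n n₁ n₀ J J w w *ᵥ γ) := by
  have hdiff : (fun i => Y1 i - (of w *ᵥ γ) i - (Y0 i - (of w *ᵥ γ) i)) = fun i => Y1 i - Y0 i :=
    funext fun i => by ring
  have hinv : ((n₁ : ℝ) / n)⁻¹ + ((n₀ : ℝ) / n)⁻¹ = ((n₁ : ℝ) / n * (n₀ / n))⁻¹ := by
    have hn : (n : ℝ) = n₁ + n₀ := by exact_mod_cast hsum.symm
    have : (n₁ : ℝ) ≠ 0 := by positivity
    have : (n₀ : ℝ) ≠ 0 := by positivity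
    rw [hn]
    field_simp
    ring
  simp only [Vtt, hdiff, popVar_sub_of_sum_eq_zero _ _ (sum_mulVec_eq_zero hw γ), VvecTau,
    Vmat, dotProduct_add, dotProduct_smul, smul_mulVec, dotProduct_covVec,
    dotProduct_covMat_mulVec, smul_eq_mul]
  linear_combination (((n : ℝ) - 1)⁻¹ * ((of w *ᵥ γ) ⬝ᵥ (of w *ᵥ γ))) * hinv

end Adjustment

theorem Matrix.IsSymm.dotProduct_sub_mulVec_sub {m R : Type*} [Fintype m] [CommRing R]
    {A : Matrix m m R} (hA : A.IsSymm) (x y : m → R) :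
    (x - y) ⬝ᵥ (A *ᵥ (x - y)) = x ⬝ᵥ (A *ᵥ x) - 2 * (x ⬝ᵥ (A *ᵥ y)) + y ⬝ᵥ (A *ᵥ y) := by
  have hswap : y ⬝ᵥ (A *ᵥ x) = x ⬝ᵥ (A *ᵥ y) := by
    rw [dotProduct_mulVec, dotProduct_comm, ← mulVec_transpose, hA.eq]
  rw [mulVec_sub, dotProduct_sub, sub_dotProduct, sub_dotProduct, hswap]
  ring

section Vmat

variable {n n₁ n₀ J : ℕ}

lemma isSymm_Vmat (w : Fin n → Fin J → ℝ) : (Vmat n n₁ n₀ J J w w).IsSymm := by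
  have hgram : ((of w)ᵀ * of w).IsSymm := by rw [IsSymm, transpose_mul, transpose_transpose]
  rw [Vmat, covMat_eq_smul]
  exact (hgram.smul _).smul _

lemma isUnit_det_Vmat (hsum : n₁ + n₀ = n) (hn₁ : 0 < n₁) (hn₀ : 0 < n₀)
    {w : Fin n → Fin J → ℝ} (hSw : IsUnit (covMat n J J w w).det) :
    IsUnit (Vmat n n₁ n₀ J J w w).det := by
  have hn : 0 < n := by omega
  rw [Vmat, det_smul]
  exact ((IsUnit.mk0 _ (by positivity)).pow _).mul hSw

end Vmat

theorem statement8_general (n n₁ n₀ J : ℕ) (hn₁ : 1 ≤ n₁) (hn₀ : 1 ≤ n₀)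
    (hsum : n₁ + n₀ = n) (Y1 Y0 : Fin n → ℝ) (w : Fin n → Fin J → ℝ)
    (hw : ∀ j, ∑ i, w i j = 0) (hSw : IsUnit (covMat n J J w w).det)
    (γt : Fin J → ℝ)
    (hγt : γt = (Vmat n n₁ n₀ J J w w)⁻¹ *ᵥ VvecTau n n₁ n₀ J w Y1 Y0) :
    ∀ γ : Fin J → ℝ,
      (n : ℝ) * crVar n n₁
          (fun s => tauHat n n₁ n₀ Y1 Y0 s - γ ⬝ᵥ tauHatVec n n₁ n₀ J w s)
        = (Vtt n n₁ n₀ Y1 Y0 - VvecTau n n₁ n₀ J w Y1 Y0 ⬝ᵥ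
              ((Vmat n n₁ n₀ J J w w)⁻¹ *ᵥ VvecTau n n₁ n₀ J w Y1 Y0))
          + (((n₁ : ℝ) / n) * ((n₀ : ℝ) / n))⁻¹ *
              ((γ - γt) ⬝ᵥ (covMat n J J w w *ᵥ (γ - γt))) := by
  intro γ
  have hAγt : Vmat n n₁ n₀ J J w w *ᵥ γt = VvecTau n n₁ n₀ J w Y1 Y0 := by
    rw [hγt, mulVec_mulVec, mul_nonsing_inv _ (isUnit_det_Vmat hsum hn₁ hn₀ hSw), one_mulVec]
  have hadjusted : (fun s => tauHat n n₁ n₀ Y1 Y0 s - γ ⬝ᵥ tauHatVec n n₁ n₀ J w s)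
      = tauHat n n₁ n₀ (fun i => Y1 i - (of w *ᵥ γ) i) (fun i => Y0 i - (of w *ᵥ γ) i) :=
    funext fun s => by rw [dotProduct_tauHatVec, tauHat_sub]
  have hquad : (((n₁ : ℝ) / n) * ((n₀ : ℝ) / n))⁻¹ *
      ((γ - γt) ⬝ᵥ (covMat n J J w w *ᵥ (γ - γt)))
        = (γ - γt) ⬝ᵥ (Vmat n n₁ n₀ J J w w *ᵥ (γ - γt)) := by
    rw [Vmat, smul_mulVec, dotProduct_smul, smul_eq_mul]
  rw [hadjusted, mul_crVar_tauHat hsum hn₁ hn₀, Vtt_sub_mulVec hsum hn₁ hn₀ Y1 Y0 hw, hquad,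
    (isSymm_Vmat w).dotProduct_sub_mulVec_sub, hAγt, ← hγt,
    dotProduct_comm (VvecTau n n₁ n₀ J w Y1 Y0) γt]
  ring

/-- Lemma A11: for every `γ`,
`n·Var(τ̂ − γᵀτ̂_w) = (V_ττ − V_τw V_ww⁻¹ V_wτ) + (r₁r₀)⁻¹ (γ−γ̃)ᵀ S_w² (γ−γ̃)`. -/
theorem statement8 (n n₁ n₀ J : ℕ) (hn : 2 ≤ n) (hn₁ : 1 ≤ n₁) (hn₀ : 1 ≤ n₀)
    (hsum : n₁ + n₀ = n) (Y1 Y0 : Fin n → ℝ) (w : Fin n → Fin J → ℝ)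
    (hw : ∀ j, ∑ i, w i j = 0) (hSw : IsUnit (covMat n J J w w).det)
    (γt : Fin J → ℝ)
    (hγt : γt = (Vmat n n₁ n₀ J J w w)⁻¹ *ᵥ VvecTau n n₁ n₀ J w Y1 Y0) :
    ∀ γ : Fin J → ℝ,
      (n : ℝ) * crVar n n₁
          (fun s => tauHat n n₁ n₀ Y1 Y0 s - γ ⬝ᵥ tauHatVec n n₁ n₀ J w s)
        = (Vtt n n₁ n₀ Y1 Y0 - VvecTau n n₁ n₀ J w Y1 Y0 ⬝ᵥ
              ((Vmat n n₁ n₀ J J w w)⁻¹ *ᵥ VvecTau n n₁ n₀ J w Y1 Y0))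
          + (((n₁ : ℝ) / n) * ((n₀ : ℝ) / n))⁻¹ *
              ((γ - γt) ⬝ᵥ (covMat n J J w w *ᵥ (γ - γt))) :=
  statement8_general n n₁ n₀ J hn₁ hn₀ hsum Y1 Y0 w hw hSw γt hγt
end
end

section
/- (Decomposition of the L_{K,a}-coefficient in Theorem 2) For every γ ∈ ℝ^J, (V_τx − γᵀV_wx) V_xx⁻¹ (V_xτ − V_xw γ) = [V_τx V_xx⁻¹ V_xτ − (V_τx V_xx⁻¹ V_xw) M⁻¹ (V_wx V_xx⁻¹ V_xτ)] + (γ − γ̃_proj)ᵀ M (γ − γ̃_proj). With γ = r₀β₁ + r₁β₀, the left side equals V_ττ(β₁,β₀) R²_{τ,x}(β₁,β₀) = n·Var{proj(τ̂(β₁,β₀) ∣ τ̂_x)}, so this is the paper's identity V_ττ(β₁,β₀) R²_{τ,x}(β₁,β₀) = V_ττ R²_{τ,x}(1 − R²_proj) + (r₁r₀)⁻¹ (γ − γ̃_proj)ᵀ S²_{w∣x} (γ − γ̃_proj). -/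
open Finset Matrix

noncomputable section

lemma aux9 {J K : ℕ} (A : Matrix (Fin J) (Fin K) ℝ) (B : Matrix (Fin K) (Fin K) ℝ)
    (hB : Bᵀ = B) (M : Matrix (Fin J) (Fin J) ℝ) (hM : M = A * B * Aᵀ)
    (hMunit : IsUnit M.det) (v : Fin K → ℝ) (γp : Fin J → ℝ)
    (hγp : γp = M⁻¹ *ᵥ ((A * B) *ᵥ v)) (γ : Fin J → ℝ) :
    (v - γ ᵥ* A) ⬝ᵥ (B *ᵥ (v - Aᵀ *ᵥ γ))
      = (v ⬝ᵥ (B *ᵥ v) - ((v ᵥ* B) ᵥ* Aᵀ) ⬝ᵥ (M⁻¹ *ᵥ ((A * B) *ᵥ v)))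
        + (γ - γp) ⬝ᵥ (M *ᵥ (γ - γp)) := by
  have hMs : Mᵀ = M := by rw [hM]; simp [Matrix.transpose_mul, hB, Matrix.mul_assoc]
  have dp : ∀ {m k : ℕ} (C : Matrix (Fin m) (Fin k) ℝ) (a : Fin m → ℝ) (b : Fin k → ℝ),
      a ⬝ᵥ (C *ᵥ b) = (Cᵀ *ᵥ a) ⬝ᵥ b := by
    intro m k C a b
    rw [Matrix.dotProduct_mulVec, Matrix.mulVec_transpose]
  have symmB : ∀ a b : Fin K → ℝ, a ⬝ᵥ (B *ᵥ b) = b ⬝ᵥ (B *ᵥ a) := by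
    intro a b
    rw [dp, hB, dotProduct_comm]
  have symmM : ∀ a b : Fin J → ℝ, a ⬝ᵥ (M *ᵥ b) = b ⬝ᵥ (M *ᵥ a) := by
    intro a b
    rw [dp, hMs, dotProduct_comm]
  have hγA : γ ᵥ* A = Aᵀ *ᵥ γ := (Matrix.mulVec_transpose A γ).symm
  have hMγp : M *ᵥ γp = (A * B) *ᵥ v := by
    rw [hγp, Matrix.mulVec_mulVec, Matrix.mul_nonsing_inv M hMunit, Matrix.one_mulVec]
  have huBu : (Aᵀ *ᵥ γ) ⬝ᵥ (B *ᵥ (Aᵀ *ᵥ γ)) = γ ⬝ᵥ (M *ᵥ γ) := by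
    symm
    calc γ ⬝ᵥ (M *ᵥ γ) = γ ⬝ᵥ ((A * (B * Aᵀ)) *ᵥ γ) := by rw [hM, Matrix.mul_assoc]
      _ = γ ⬝ᵥ (A *ᵥ ((B * Aᵀ) *ᵥ γ)) := by rw [Matrix.mulVec_mulVec]
      _ = (Aᵀ *ᵥ γ) ⬝ᵥ ((B * Aᵀ) *ᵥ γ) := dp A γ _
      _ = (Aᵀ *ᵥ γ) ⬝ᵥ (B *ᵥ (Aᵀ *ᵥ γ)) := by rw [Matrix.mulVec_mulVec]
  have hvBu : v ⬝ᵥ (B *ᵥ (Aᵀ *ᵥ γ)) = γ ⬝ᵥ ((A * B) *ᵥ v) := by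
    symm
    calc γ ⬝ᵥ ((A * B) *ᵥ v) = γ ⬝ᵥ (A *ᵥ (B *ᵥ v)) := by rw [Matrix.mulVec_mulVec]
      _ = (Aᵀ *ᵥ γ) ⬝ᵥ (B *ᵥ v) := dp A γ _
      _ = v ⬝ᵥ (B *ᵥ (Aᵀ *ᵥ γ)) := symmB _ _
  have hmid : ((v ᵥ* B) ᵥ* Aᵀ) ⬝ᵥ (M⁻¹ *ᵥ ((A * B) *ᵥ v)) = γp ⬝ᵥ (M *ᵥ γp) := by
    have h1 : (v ᵥ* B) ᵥ* Aᵀ = (A * B) *ᵥ v := by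
      rw [Matrix.vecMul_transpose, ← Matrix.mulVec_transpose, hB, Matrix.mulVec_mulVec]
    rw [h1, ← hγp, hMγp, dotProduct_comm]
  have hγMγp : γ ⬝ᵥ (M *ᵥ γp) = γ ⬝ᵥ ((A * B) *ᵥ v) := by rw [hMγp]
  have hγpMγp : γp ⬝ᵥ (M *ᵥ γp) = γp ⬝ᵥ ((A * B) *ᵥ v) := by rw [hMγp]
  -- expand both sides
  have expandL : (v - γ ᵥ* A) ⬝ᵥ (B *ᵥ (v - Aᵀ *ᵥ γ))
      = v ⬝ᵥ (B *ᵥ v) - 2 * (γ ⬝ᵥ ((A * B) *ᵥ v)) + γ ⬝ᵥ (M *ᵥ γ) := by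
    rw [hγA, Matrix.mulVec_sub, sub_dotProduct, dotProduct_sub,
      dotProduct_sub, huBu, hvBu, symmB (Aᵀ *ᵥ γ) v, hvBu]
    ring
  have expandR : (γ - γp) ⬝ᵥ (M *ᵥ (γ - γp))
      = γ ⬝ᵥ (M *ᵥ γ) - 2 * (γ ⬝ᵥ ((A * B) *ᵥ v)) + γp ⬝ᵥ ((A * B) *ᵥ v) := by
    rw [Matrix.mulVec_sub, sub_dotProduct, dotProduct_sub,
      dotProduct_sub, symmM γp γ, hγMγp, hγpMγp]
    ring
  rw [expandL, expandR, hmid, hγpMγp]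
  ring

/-- decomposition of the `L_{K,a}`-coefficient in Theorem 2:
for every `γ`, `(V_τx − γᵀV_wx) V_xx⁻¹ (V_xτ − V_xw γ)
 = [V_τx V_xx⁻¹ V_xτ − (V_τx V_xx⁻¹ V_xw) M⁻¹ (V_wx V_xx⁻¹ V_xτ)]
   + (γ − γ̃_proj)ᵀ M (γ − γ̃_proj)`. -/
theorem statement9 (n n₁ n₀ J K : ℕ) (hn : 2 ≤ n) (hn₁ : 1 ≤ n₁) (hn₀ : 1 ≤ n₀)
    (hsum : n₁ + n₀ = n) (Y1 Y0 : Fin n → ℝ) (w : Fin n → Fin J → ℝ)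
    (x : Fin n → Fin K → ℝ) (hw : ∀ j, ∑ i, w i j = 0) (hx : ∀ k, ∑ i, x i k = 0)
    (hSx : IsUnit (covMat n K K x x).det)
    (M : Matrix (Fin J) (Fin J) ℝ)
    (hM : M = Vmat n n₁ n₀ J K w x * (Vmat n n₁ n₀ K K x x)⁻¹ *
        (Vmat n n₁ n₀ J K w x)ᵀ)
    (hMunit : IsUnit M.det)
    (γp : Fin J → ℝ)
    (hγp : γp = M⁻¹ *ᵥ ((Vmat n n₁ n₀ J K w x * (Vmat n n₁ n₀ K K x x)⁻¹) *ᵥ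
        VvecTau n n₁ n₀ K x Y1 Y0)) :
    ∀ γ : Fin J → ℝ,
      (VvecTau n n₁ n₀ K x Y1 Y0 - γ ᵥ* Vmat n n₁ n₀ J K w x) ⬝ᵥ
          ((Vmat n n₁ n₀ K K x x)⁻¹ *ᵥ
            (VvecTau n n₁ n₀ K x Y1 Y0 - (Vmat n n₁ n₀ J K w x)ᵀ *ᵥ γ))
        = (VvecTau n n₁ n₀ K x Y1 Y0 ⬝ᵥ
              ((Vmat n n₁ n₀ K K x x)⁻¹ *ᵥ VvecTau n n₁ n₀ K x Y1 Y0)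
            - ((VvecTau n n₁ n₀ K x Y1 Y0 ᵥ* (Vmat n n₁ n₀ K K x x)⁻¹) ᵥ*
                (Vmat n n₁ n₀ J K w x)ᵀ) ⬝ᵥ
              (M⁻¹ *ᵥ ((Vmat n n₁ n₀ J K w x * (Vmat n n₁ n₀ K K x x)⁻¹) *ᵥ
                VvecTau n n₁ n₀ K x Y1 Y0)))
          + (γ - γp) ⬝ᵥ (M *ᵥ (γ - γp)) := by
  intro γ
  have hxx : (Vmat n n₁ n₀ K K x x)ᵀ = Vmat n n₁ n₀ K K x x := by
    unfold Vmat covMat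
    ext j k
    simp [Matrix.transpose_apply, mul_comm (x _ j) (x _ k)]
  have hB : ((Vmat n n₁ n₀ K K x x)⁻¹)ᵀ = (Vmat n n₁ n₀ K K x x)⁻¹ := by
    rw [Matrix.transpose_nonsing_inv, hxx]
  exact aux9 (Vmat n n₁ n₀ J K w x) (Vmat n n₁ n₀ K K x x)⁻¹ hB M hM hMunit
    (VvecTau n n₁ n₀ K x Y1 Y0) γp hγp γ
end
end

section
/- (Decomposition of the ε-coefficient in Theorem 2) For every γ ∈ ℝ^J, [V_ττ − 2γᵀV_wτ + γᵀV_ww γ] − (V_τx − γᵀV_wx) V_xx⁻¹ (V_xτ − V_xw γ) = [(V_ττ − V_τx V_xx⁻¹ V_xτ) − (V_wτ − V_wx V_xx⁻¹ V_xτ)ᵀ D⁻¹ (V_wτ − V_wx V_xx⁻¹ V_xτ)] + (γ − γ̃_res)ᵀ D (γ − γ̃_res). With γ = r₀β₁ + r₁β₀, the left side equals V_ττ(β₁,β₀){1 − R²_{τ,x}(β₁,β₀)} = n·Var{res(τ̂(β₁,β₀) ∣ τ̂_x)}, so this is the paper's identity V_ττ(β₁,β₀){1 − R²_{τ,x}(β₁,β₀)}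 = V_ττ(1 − R²_{τ,x})(1 − R²_res) + (r₁r₀)⁻¹ (γ − γ̃_res)ᵀ S²_{w∖x} (γ − γ̃_res). -/
open Finset Matrix

noncomputable section

private lemma dsymm {m : ℕ} (M : Matrix (Fin m) (Fin m) ℝ) (hM : Mᵀ = M) (a b : Fin m → ℝ) :
    a ⬝ᵥ (M *ᵥ b) = b ⬝ᵥ (M *ᵥ a) := by
  simp only [dotProduct, Matrix.mulVec, Finset.mul_sum]
  rw [Finset.sum_comm]
  refine Finset.sum_congr rfl fun j _ => Finset.sum_congr rfl fun i _ => ?_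
  rw [show M i j = M j i from congrFun (congrFun hM j) i]
  ring

private lemma dtrans {m k : ℕ} (B : Matrix (Fin m) (Fin k) ℝ) (a : Fin m → ℝ) (b : Fin k → ℝ) :
    (Bᵀ *ᵥ a) ⬝ᵥ b = a ⬝ᵥ (B *ᵥ b) := by
  rw [Matrix.mulVec_transpose, ← Matrix.dotProduct_mulVec]

private lemma key {m k : ℕ} (A : Matrix (Fin m) (Fin m) ℝ) (B : Matrix (Fin m) (Fin k) ℝ)
    (C : Matrix (Fin k) (Fin k) ℝ) (D : Matrix (Fin m) (Fin m) ℝ)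
    (hA : Aᵀ = A) (hC : Cᵀ = C) (hD : D = A - B * C * Bᵀ) (hDu : IsUnit D.det)
    (t : ℝ) (vw : Fin m → ℝ) (vx : Fin k → ℝ) (γr : Fin m → ℝ)
    (hγr : γr = D⁻¹ *ᵥ (vw - (B * C) *ᵥ vx)) (γ : Fin m → ℝ) :
    (t - 2 * (γ ⬝ᵥ vw) + γ ⬝ᵥ (A *ᵥ γ)) -
      (vx - γ ᵥ* B) ⬝ᵥ (C *ᵥ (vx - Bᵀ *ᵥ γ))
    = ((t - vx ⬝ᵥ (C *ᵥ vx)) - (vw - (B * C) *ᵥ vx) ⬝ᵥ (D⁻¹ *ᵥ (vw - (B * C) *ᵥ vx)))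
      + (γ - γr) ⬝ᵥ (D *ᵥ (γ - γr)) := by
  set u : Fin m → ℝ := vw - (B * C) *ᵥ vx with hu
  have hDsym : Dᵀ = D := by
    rw [hD, Matrix.transpose_sub, hA, Matrix.transpose_mul, Matrix.transpose_mul,
      Matrix.transpose_transpose, hC, Matrix.mul_assoc]
  have hDγr : D *ᵥ γr = u := by
    rw [hγr, Matrix.mulVec_mulVec, Matrix.mul_nonsing_inv D hDu, Matrix.one_mulVec]
  -- expansions
  have e1 : γ ᵥ* B = Bᵀ *ᵥ γ := (Matrix.mulVec_transpose B γ).symm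
  have e2 : vx ⬝ᵥ (C *ᵥ (Bᵀ *ᵥ γ)) = γ ⬝ᵥ ((B * C) *ᵥ vx) := by
    rw [dsymm C hC, dtrans, Matrix.mulVec_mulVec]
  have e3 : (Bᵀ *ᵥ γ) ⬝ᵥ (C *ᵥ vx) = γ ⬝ᵥ ((B * C) *ᵥ vx) := by
    rw [dtrans, Matrix.mulVec_mulVec]
  have e4 : (Bᵀ *ᵥ γ) ⬝ᵥ (C *ᵥ (Bᵀ *ᵥ γ)) = γ ⬝ᵥ ((B * C * Bᵀ) *ᵥ γ) := by
    rw [dtrans, Matrix.mulVec_mulVec, Matrix.mulVec_mulVec]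
  have e5 : γ ⬝ᵥ (D *ᵥ γr) = γ ⬝ᵥ u := by rw [hDγr]
  have e6 : γr ⬝ᵥ (D *ᵥ γ) = γ ⬝ᵥ u := by rw [dsymm D hDsym, hDγr]
  have e7 : γr ⬝ᵥ (D *ᵥ γr) = u ⬝ᵥ (D⁻¹ *ᵥ u) := by
    rw [hDγr, dotProduct_comm, hγr]
  have e8 : γ ⬝ᵥ (D *ᵥ γ) = γ ⬝ᵥ (A *ᵥ γ) - γ ⬝ᵥ ((B * C * Bᵀ) *ᵥ γ) := by
    rw [hD, Matrix.sub_mulVec, dotProduct_sub]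
  have e9 : γ ⬝ᵥ u = γ ⬝ᵥ vw - γ ⬝ᵥ ((B * C) *ᵥ vx) := by
    rw [hu, dotProduct_sub]
  rw [e1]
  simp only [Matrix.mulVec_sub, dotProduct_sub, sub_dotProduct,
    Matrix.sub_mulVec]
  linear_combination e2 + e3 - e4 + e5 + e6 - e7 - e8 + 2 * e9

/-- decomposition of the `ε`-coefficient in Theorem 2: for every `γ`,
`[V_ττ − 2γᵀV_wτ + γᵀV_ww γ] − (V_τx − γᵀV_wx) V_xx⁻¹ (V_xτ − V_xw γ)
 = [(V_ττ − V_τx V_xx⁻¹ V_xτ) − (V_wτ − V_wx V_xx⁻¹ V_xτ)ᵀ D⁻¹ (V_wτ − V_wx V_xx⁻¹ V_xτ)]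
   + (γ − γ̃_res)ᵀ D (γ − γ̃_res)`. -/
theorem statement10 (n n₁ n₀ J K : ℕ) (hn : 2 ≤ n) (hn₁ : 1 ≤ n₁) (hn₀ : 1 ≤ n₀)
    (hsum : n₁ + n₀ = n) (Y1 Y0 : Fin n → ℝ) (w : Fin n → Fin J → ℝ)
    (x : Fin n → Fin K → ℝ) (hw : ∀ j, ∑ i, w i j = 0) (hx : ∀ k, ∑ i, x i k = 0)
    (hSx : IsUnit (covMat n K K x x).det)
    (D : Matrix (Fin J) (Fin J) ℝ)
    (hD : D = Vmat n n₁ n₀ J J w w -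
        Vmat n n₁ n₀ J K w x * (Vmat n n₁ n₀ K K x x)⁻¹ * (Vmat n n₁ n₀ J K w x)ᵀ)
    (hDunit : IsUnit D.det)
    (γr : Fin J → ℝ)
    (hγr : γr = D⁻¹ *ᵥ (VvecTau n n₁ n₀ J w Y1 Y0 -
        (Vmat n n₁ n₀ J K w x * (Vmat n n₁ n₀ K K x x)⁻¹) *ᵥ
          VvecTau n n₁ n₀ K x Y1 Y0)) :
    ∀ γ : Fin J → ℝ,
      (Vtt n n₁ n₀ Y1 Y0 - 2 * (γ ⬝ᵥ VvecTau n n₁ n₀ J w Y1 Y0)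
            + γ ⬝ᵥ (Vmat n n₁ n₀ J J w w *ᵥ γ))
          - (VvecTau n n₁ n₀ K x Y1 Y0 - γ ᵥ* Vmat n n₁ n₀ J K w x) ⬝ᵥ
              ((Vmat n n₁ n₀ K K x x)⁻¹ *ᵥ
                (VvecTau n n₁ n₀ K x Y1 Y0 - (Vmat n n₁ n₀ J K w x)ᵀ *ᵥ γ))
        = ((Vtt n n₁ n₀ Y1 Y0 - VvecTau n n₁ n₀ K x Y1 Y0 ⬝ᵥ
              ((Vmat n n₁ n₀ K K x x)⁻¹ *ᵥ VvecTau n n₁ n₀ K x Y1 Y0))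
            - (VvecTau n n₁ n₀ J w Y1 Y0 -
                (Vmat n n₁ n₀ J K w x * (Vmat n n₁ n₀ K K x x)⁻¹) *ᵥ
                  VvecTau n n₁ n₀ K x Y1 Y0) ⬝ᵥ
              (D⁻¹ *ᵥ (VvecTau n n₁ n₀ J w Y1 Y0 -
                (Vmat n n₁ n₀ J K w x * (Vmat n n₁ n₀ K K x x)⁻¹) *ᵥ
                  VvecTau n n₁ n₀ K x Y1 Y0)))
          + (γ - γr) ⬝ᵥ (D *ᵥ (γ - γr)) := by
  intro γ
  have hsymm : ∀ (m : ℕ) (v : Fin n → Fin m → ℝ), (covMat n m m v v)ᵀ = covMat n m m v v := by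
    intro m v
    ext j k
    simp only [Matrix.transpose_apply, covMat, Matrix.of_apply]
    congr 1
    exact Finset.sum_congr rfl fun i _ => by ring
  have hA : (Vmat n n₁ n₀ J J w w)ᵀ = Vmat n n₁ n₀ J J w w := by
    rw [Vmat, Matrix.transpose_smul, hsymm]
  have hC : ((Vmat n n₁ n₀ K K x x)⁻¹)ᵀ = (Vmat n n₁ n₀ K K x x)⁻¹ := by
    rw [Matrix.transpose_nonsing_inv]
    congr 1
    rw [Vmat, Matrix.transpose_smul, hsymm]
  exact key (Vmat n n₁ n₀ J J w w) (Vmat n n₁ n₀ J K w x) ((Vmat n n₁ n₀ K K x x)⁻¹) D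
    hA hC hD hDunit (Vtt n n₁ n₀ Y1 Y0) (VvecTau n n₁ n₀ J w Y1 Y0)
    (VvecTau n n₁ n₀ K x Y1 Y0) γr hγr γ
end
end

section
/- (Partial covariance identity from Remark 2) Define the residual statistics e_τ = (τ̂ − τ) − V_τx V_xx⁻¹ τ̂_x ∈ ℝ and e_w = τ̂_w − V_wx V_xx⁻¹ τ̂_x ∈ ℝ^J. Under complete randomization, Cov(e_w, e_τ) = n₁⁻¹ S_{w,Y(1)∣x} + n₀⁻¹ S_{w,Y(0)∣x}, where S_{w,Y(z)∣x} = S_{w,Y(z)} − S_{w,x} (S_x²)⁻¹ S_{x,Y(z)} is the finite-population partial covariance of w and Y(z) given x. -/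
/-!
Both residual statistics are affine in the treated set `s`. Since `w` and `x` are centered,
`e_w(s) = ∑_{i ∈ s} (n₁⁻¹ + n₀⁻¹) r_i` with the regression residual
`r_i = w_ij - (S_{w,x} (S_x²)⁻¹ x_i)_j` (the factors `r₁ r₀` in `V_wx V_xx⁻¹` cancel), and
`e_τ(s) = κ + ∑_{i ∈ s} (n₁⁻¹ Y_i(1) + n₀⁻¹ Y_i(0) - (n₁⁻¹ + n₀⁻¹) b ⬝ x_i)` for a constant `κ`
and a fixed vector `b`. The inclusion probabilities `n₁/n` and `n₁(n₁-1)/(n(n-1))` of complete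
randomization give `Cov(∑_{i∈s} u_i, ∑_{i∈s} v_i) = n₁n₀/(n(n-1)) (∑ u_i v_i - n⁻¹ ∑ u ∑ v)`.
The residual `r` sums to zero and is orthogonal to every linear function of `x`, so the `b`-term
drops out and `∑ r_i Y_i(z) = (n-1) S_{w,Y(z)∣x}`; finally `n₁ n₀ (n₁⁻¹ + n₀⁻¹) = n`.
-/

open Finset Matrix

noncomputable section

section CompleteRandomization

variable {n n₁ : ℕ}

lemma crE_sum {ι : Type*} (t : Finset ι) (f : ι → Finset (Fin n) → ℝ) :
    crE n n₁ (fun s => ∑ i ∈ t, f i s) = ∑ i ∈ t, crE n n₁ (f i) := by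
  simp only [crE, Finset.sum_div]
  exact Finset.sum_comm

lemma crE_const_mul (c : ℝ) (f : Finset (Fin n) → ℝ) :
    crE n n₁ (fun s => c * f s) = c * crE n n₁ f := by
  simp only [crE, ← Finset.mul_sum, mul_div_assoc]

lemma crE_add (f g : Finset (Fin n) → ℝ) :
    crE n n₁ (fun s => f s + g s) = crE n n₁ f + crE n n₁ g := by
  simp only [crE, Finset.sum_add_distrib, add_div]

lemma crE_const (hn₁ : n₁ ≤ n) (c : ℝ) : crE n n₁ (fun _ => c) = c := by
  have : ((Omega n n₁).card : ℝ) ≠ 0 := by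
    simp [Omega, Finset.card_powersetCard, (Nat.choose_pos hn₁).ne']
  simp [crE, this]

lemma crCov_eq_crE_mul_sub (hn₁ : n₁ ≤ n) (f g : Finset (Fin n) → ℝ) :
    crCov n n₁ f g = crE n n₁ (fun s => f s * g s) - crE n n₁ f * crE n n₁ g := by
  have h : ∀ s, (f s - crE n n₁ f) * (g s - crE n n₁ g) =
      f s * g s + (-crE n n₁ g * f s + (-crE n n₁ f * g s + crE n n₁ f * crE n n₁ g)) :=
    fun s => by ring
  simp only [crCov, h, crE_add, crE_const_mul, crE_const hn₁]
  ring

lemma crCov_const_add_right (hn₁ : n₁ ≤ n) (f g : Finset (Fin n) → ℝ) (κ : ℝ) :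
    crCov n n₁ f (fun s => κ + g s) = crCov n n₁ f g := by
  simp only [crCov, crE_add, crE_const hn₁, add_sub_add_left_eq_sub]

lemma crE_indicator_subset (hn₁ : n₁ ≤ n) (t : Finset (Fin n)) :
    crE n n₁ (fun s => if t ⊆ s then 1 else 0) = (n₁.choose #t : ℝ) / n.choose #t := by
  have htn : #t ≤ n := by simpa using Finset.card_le_univ t
  have hchoose : (n.choose #t : ℝ) ≠ 0 := by exact_mod_cast (Nat.choose_pos htn).ne'
  have hOmega : (n.choose n₁ : ℝ) ≠ 0 := by exact_mod_cast (Nat.choose_pos hn₁).ne'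
  rw [crE, Finset.sum_boole, Omega, Finset.card_powersetCard, Finset.card_univ,
    Fintype.card_fin, div_eq_div_iff hOmega hchoose]
  rcases le_or_gt #t n₁ with htk | htk
  · rw [Finset.card_filter_powersetCard_subset t _ _ (Finset.subset_univ t) htk,
      Finset.card_univ, Fintype.card_fin]
    exact_mod_cast by linarith [Nat.choose_mul (n := n) htk]
  · have : #{s ∈ powersetCard n₁ univ | t ⊆ s} = 0 := by
      refine Finset.card_eq_zero.mpr (Finset.filter_eq_empty_iff.mpr fun s hs hts => ?_)
      have := Finset.card_le_card hts
      rw [(Finset.mem_powersetCard.mp hs).2] at this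
      omega
    simp [this, Nat.choose_eq_zero_of_lt htk]

lemma crE_indicator_mem_and_mem (hn₁ : n₁ ≤ n) (i j : Fin n) :
    crE n n₁ (fun s => if i ∈ s ∧ j ∈ s then 1 else 0) =
      if i = j then (n₁ : ℝ) / n else n₁ * (n₁ - 1) / (n * (n - 1)) := by
  have : ∀ s : Finset (Fin n), (i ∈ s ∧ j ∈ s) ↔ {i, j} ⊆ s := fun s => by
    simp [Finset.insert_subset_iff]
  simp_rw [this, crE_indicator_subset hn₁]
  split_ifs with h
  · simp [h]
  · rw [Finset.card_pair h, Nat.cast_choose_two, Nat.cast_choose_two]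
    exact div_div_div_cancel_right₀ two_ne_zero _ _

lemma sum_mem_eq_sum_mul_indicator (s : Finset (Fin n)) (u : Fin n → ℝ) :
    ∑ i ∈ s, u i = ∑ i, u i * if i ∈ s then 1 else 0 := by
  simp [Finset.sum_ite_mem]

lemma crE_sum_mem (hn₁ : n₁ ≤ n) (u : Fin n → ℝ) :
    crE n n₁ (fun s => ∑ i ∈ s, u i) = n₁ / n * ∑ i, u i := by
  have h := fun i => crE_indicator_mem_and_mem hn₁ i i
  simp only [and_self, if_true] at h
  conv_lhs => simp only [sum_mem_eq_sum_mul_indicator _ u, crE_sum, crE_const_mul, h]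
  rw [Finset.mul_sum]
  exact Finset.sum_congr rfl fun i _ => mul_comm _ _

lemma crE_sum_mem_mul_sum_mem (hn₁ : n₁ ≤ n) (u v : Fin n → ℝ) :
    crE n n₁ (fun s => (∑ i ∈ s, u i) * ∑ i ∈ s, v i) =
      n₁ * (n₁ - 1) / (n * (n - 1)) * ((∑ i, u i) * ∑ i, v i)
        + (n₁ / n - n₁ * (n₁ - 1) / (n * (n - 1))) * ∑ i, u i * v i := by
  have h : ∀ s : Finset (Fin n), (∑ i ∈ s, u i) * ∑ i ∈ s, v i =
      ∑ i, ∑ j, u i * v j * if i ∈ s ∧ j ∈ s then 1 else 0 := fun s => by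
    simp only [sum_mem_eq_sum_mul_indicator s, Finset.sum_mul_sum]
    refine sum_congr rfl fun i _ => sum_congr rfl fun j _ => ?_
    by_cases hi : i ∈ s <;> by_cases hj : j ∈ s <;> simp [hi, hj]
  conv_lhs => simp only [h, crE_sum, crE_const_mul, crE_indicator_mem_and_mem hn₁]
  set p : ℝ := n₁ / n
  set q : ℝ := n₁ * (n₁ - 1) / (n * (n - 1))
  have hpq : ∀ i j : Fin n, (if i = j then p else q) = q + if i = j then p - q else 0 :=
    fun i j => by split_ifs <;> ring
  simp only [hpq, mul_add, mul_ite, mul_zero, Finset.sum_add_distrib, Finset.sum_ite_eq,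
    Finset.mem_univ, if_true]
  rw [Finset.sum_mul_sum]
  simp only [Finset.mul_sum]
  exact congrArg₂ _ (sum_congr rfl fun i _ => sum_congr rfl fun j _ => by ring)
    (sum_congr rfl fun i _ => by ring)

lemma crCov_sum_mem (hn : 2 ≤ n) (hn₁ : n₁ ≤ n) (u v : Fin n → ℝ) :
    crCov n n₁ (fun s => ∑ i ∈ s, u i) (fun s => ∑ i ∈ s, v i) =
      n₁ * (n - n₁) / (n * (n - 1)) * (∑ i, u i * v i - (∑ i, u i) * (∑ i, v i) / n) := by
  have hn1 : (n : ℝ) - 1 ≠ 0 := by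
    have : (2 : ℝ) ≤ n := by exact_mod_cast hn
    linarith
  rw [crCov_eq_crE_mul_sub hn₁, crE_sum_mem_mul_sum_mem hn₁, crE_sum_mem hn₁, crE_sum_mem hn₁]
  field_simp
  ring

end CompleteRandomization

section DifferenceInMeans

variable {n : ℕ}

lemma diffInMeans_eq_const_add_sum_mem (n₁ n₀ : ℕ) (a b : Fin n → ℝ) (s : Finset (Fin n)) :
    (n₁ : ℝ)⁻¹ * ∑ i, (if i ∈ s then a i else 0) - (n₀ : ℝ)⁻¹ * ∑ i, (if i ∈ s then 0 else b i)
      = -((n₀ : ℝ)⁻¹ * ∑ i, b i) + ∑ i ∈ s, ((n₁ : ℝ)⁻¹ * a i + (n₀ : ℝ)⁻¹ * b i) := by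
  have hb : ∑ i, (if i ∈ s then 0 else b i) = ∑ i, b i - ∑ i, (if i ∈ s then b i else 0) := by
    rw [← Finset.sum_sub_distrib]
    exact sum_congr rfl fun i _ => by split_ifs <;> simp
  rw [hb, Finset.sum_ite_mem, Finset.sum_ite_mem, univ_inter, Finset.sum_add_distrib,
    ← Finset.mul_sum, ← Finset.mul_sum]
  ring

lemma tauHatVec_eq_smul_sum_mem (n₁ n₀ K : ℕ) {x : Fin n → Fin K → ℝ}
    (hx : ∀ k, ∑ i, x i k = 0) (s : Finset (Fin n)) :
    tauHatVec n n₁ n₀ K x s = ((n₁ : ℝ)⁻¹ + (n₀ : ℝ)⁻¹) • ∑ i ∈ s, x i := by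
  funext k
  rw [tauHatVec, diffInMeans_eq_const_add_sum_mem, hx k]
  simp [Finset.sum_apply, Finset.mul_sum, add_mul]

lemma tauHatVec_sub_mulVec_eq_sum_mem {n₁ n₀ J K : ℕ} {w : Fin n → Fin J → ℝ}
    {x : Fin n → Fin K → ℝ} (hw : ∀ j, ∑ i, w i j = 0) (hx : ∀ k, ∑ i, x i k = 0)
    (M : Matrix (Fin J) (Fin K) ℝ) (s : Finset (Fin n)) (j : Fin J) :
    tauHatVec n n₁ n₀ J w s j - (M *ᵥ tauHatVec n n₁ n₀ K x s) j
      = ∑ i ∈ s, ((n₁ : ℝ)⁻¹ + (n₀ : ℝ)⁻¹) * (w i j - (M *ᵥ x i) j) := by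
  rw [tauHatVec_eq_smul_sum_mem _ _ _ hw, tauHatVec_eq_smul_sum_mem _ _ _ hx,
    Matrix.mulVec_smul, Matrix.mulVec_sum]
  simp only [Pi.smul_apply, Finset.sum_apply, smul_eq_mul, ← mul_sub, ← Finset.sum_sub_distrib,
    Finset.mul_sum]

lemma tauHat_sub_dotProduct_mulVec_eq {n₁ n₀ K : ℕ} (Y1 Y0 : Fin n → ℝ)
    {x : Fin n → Fin K → ℝ} (hx : ∀ k, ∑ i, x i k = 0) (a : Fin K → ℝ)
    (A : Matrix (Fin K) (Fin K) ℝ) (s : Finset (Fin n)) :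
    (tauHat n n₁ n₀ Y1 Y0 s - popMean n (fun i => Y1 i - Y0 i)) -
        a ⬝ᵥ (A *ᵥ tauHatVec n n₁ n₀ K x s)
      = (-((n₀ : ℝ)⁻¹ * ∑ i, Y0 i) - popMean n (fun i => Y1 i - Y0 i)) +
        ∑ i ∈ s, ((n₁ : ℝ)⁻¹ * Y1 i + (n₀ : ℝ)⁻¹ * Y0 i
          - ((n₁ : ℝ)⁻¹ + (n₀ : ℝ)⁻¹) * ((a ᵥ* A) ⬝ᵥ x i)) := by
  rw [tauHat, diffInMeans_eq_const_add_sum_mem, Matrix.dotProduct_mulVec,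
    tauHatVec_eq_smul_sum_mem _ _ _ hx, dotProduct_smul, dotProduct_sum, smul_eq_mul,
    Finset.sum_sub_distrib, ← Finset.mul_sum]
  ring

end DifferenceInMeans

def regCoef (n J K : ℕ) (w : Fin n → Fin J → ℝ) (x : Fin n → Fin K → ℝ) :
    Matrix (Fin J) (Fin K) ℝ :=
  covMat n J K w x * (covMat n K K x x)⁻¹

section Regression

variable {n J K : ℕ} {w : Fin n → Fin J → ℝ} {x : Fin n → Fin K → ℝ}

lemma Vmat_mul_inv_Vmat {n₁ n₀ : ℕ} (hn₁ : n₁ ≠ 0) (hn₀ : n₀ ≠ 0) (hn : n ≠ 0)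
    (hSx : IsUnit (covMat n K K x x).det) :
    Vmat n n₁ n₀ J K w x * (Vmat n n₁ n₀ K K x x)⁻¹ = regCoef n J K w x := by
  have hr : (((n₁ : ℝ) / n) * ((n₀ : ℝ) / n))⁻¹ ≠ 0 := by positivity
  have := invertibleOfNonzero hr
  rw [Vmat, Vmat, Matrix.inv_smul _ _ hSx, invOf_eq_inv, Matrix.smul_mul, Matrix.mul_smul,
    smul_smul, mul_inv_cancel₀ hr, one_smul, regCoef]

lemma sum_mul_eq_covMat (hn : n ≠ 1) (j : Fin J) (k : Fin K) :
    ∑ i, w i j * x i k = ((n : ℝ) - 1) * covMat n J K w x j k := by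
  have : (n : ℝ) - 1 ≠ 0 := sub_ne_zero.mpr (Nat.cast_ne_one.mpr hn)
  rw [covMat, Matrix.of_apply, mul_inv_cancel_left₀ this]

lemma sum_mul_eq_covVec (hn : n ≠ 1) {j : Fin J} (hw : ∑ i, w i j = 0) (Y : Fin n → ℝ) :
    ∑ i, w i j * Y i = ((n : ℝ) - 1) * covVec n J w Y j := by
  have : (n : ℝ) - 1 ≠ 0 := sub_ne_zero.mpr (Nat.cast_ne_one.mpr hn)
  simp only [covVec, mul_inv_cancel_left₀ this, mul_sub, Finset.sum_sub_distrib,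
    ← Finset.sum_mul, hw, zero_mul, sub_zero]

lemma sum_sub_mulVec_mul (M : Matrix (Fin J) (Fin K) ℝ) (j : Fin J) (f : Fin n → ℝ) :
    ∑ i, (w i j - (M *ᵥ x i) j) * f i = ∑ i, w i j * f i - ∑ k, M j k * ∑ i, x i k * f i := by
  simp only [sub_mul, Finset.sum_sub_distrib, Matrix.mulVec, dotProduct, Finset.sum_mul,
    Finset.mul_sum]
  rw [Finset.sum_comm]
  exact congrArg _ (sum_congr rfl fun k _ => sum_congr rfl fun i _ => by ring)

lemma sum_sub_mulVec_eq_zero {j : Fin J} (hw : ∑ i, w i j = 0) (hx : ∀ k, ∑ i, x i k = 0)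
    (M : Matrix (Fin J) (Fin K) ℝ) :
    ∑ i, (w i j - (M *ᵥ x i) j) = 0 := by
  simpa [hw, hx] using sum_sub_mulVec_mul (w := w) (x := x) M j (fun _ => 1)

lemma sum_residual_mul (hn : n ≠ 1) {j : Fin J} (hw : ∑ i, w i j = 0)
    (hx : ∀ k, ∑ i, x i k = 0) (Y : Fin n → ℝ) :
    ∑ i, (w i j - (regCoef n J K w x *ᵥ x i) j) * Y i
      = ((n : ℝ) - 1) * (covVec n J w Y j - (regCoef n J K w x *ᵥ covVec n K x Y) j) := by
  rw [sum_sub_mulVec_mul, sum_mul_eq_covVec hn hw]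
  simp only [sum_mul_eq_covVec hn (hx _), Matrix.mulVec, dotProduct, mul_sub, Finset.mul_sum]
  exact congrArg _ (sum_congr rfl fun k _ => by ring)

lemma sum_residual_mul_covariate (hn : n ≠ 1) (hSx : IsUnit (covMat n K K x x).det)
    (j : Fin J) (k : Fin K) :
    ∑ i, (w i j - (regCoef n J K w x *ᵥ x i) j) * x i k = 0 := by
  have hM : regCoef n J K w x * covMat n K K x x = covMat n J K w x := by
    rw [regCoef, Matrix.mul_assoc, Matrix.nonsing_inv_mul _ hSx, Matrix.mul_one]
  rw [sum_sub_mulVec_mul, sum_mul_eq_covMat hn]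
  simp only [sum_mul_eq_covMat hn, mul_left_comm _ ((n : ℝ) - 1), ← Finset.mul_sum,
    ← Matrix.mul_apply, hM, sub_self]

lemma sum_residual_mul_dotProduct (hn : n ≠ 1) (hSx : IsUnit (covMat n K K x x).det)
    (j : Fin J) (b : Fin K → ℝ) :
    ∑ i, (w i j - (regCoef n J K w x *ᵥ x i) j) * (b ⬝ᵥ x i) = 0 := by
  simp only [dotProduct, Finset.mul_sum]
  rw [Finset.sum_comm]
  refine Finset.sum_eq_zero fun k _ => ?_
  simp only [mul_left_comm _ (b k), ← Finset.mul_sum, sum_residual_mul_covariate hn hSx,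
    mul_zero]

lemma sum_residual_mul_sub_dotProduct (hn : n ≠ 1) {j : Fin J} (hw : ∑ i, w i j = 0)
    (hx : ∀ k, ∑ i, x i k = 0) (hSx : IsUnit (covMat n K K x x).det)
    (p q c : ℝ) (Y1 Y0 : Fin n → ℝ) (b : Fin K → ℝ) :
    ∑ i, (w i j - (regCoef n J K w x *ᵥ x i) j) * (p * Y1 i + q * Y0 i - c * (b ⬝ᵥ x i))
      = ((n : ℝ) - 1) * (p * (covVec n J w Y1 j - (regCoef n J K w x *ᵥ covVec n K x Y1) j)
          + q * (covVec n J w Y0 j - (regCoef n J K w x *ᵥ covVec n K x Y0) j)) := by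
  have expand : ∀ i, (w i j - (regCoef n J K w x *ᵥ x i) j) * (p * Y1 i + q * Y0 i - c * (b ⬝ᵥ x i))
      = p * ((w i j - (regCoef n J K w x *ᵥ x i) j) * Y1 i)
        + q * ((w i j - (regCoef n J K w x *ᵥ x i) j) * Y0 i)
        - c * ((w i j - (regCoef n J K w x *ᵥ x i) j) * (b ⬝ᵥ x i)) := fun i => by ring
  rw [Finset.sum_congr rfl fun i _ => expand i, Finset.sum_sub_distrib, Finset.sum_add_distrib,
    ← Finset.mul_sum, ← Finset.mul_sum, ← Finset.mul_sum, sum_residual_mul hn hw hx,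
    sum_residual_mul hn hw hx, sum_residual_mul_dotProduct hn hSx]
  ring

end Regression

/-- partial-covariance identity from Remark 2: with
`e_τ = (τ̂ − τ) − V_τx V_xx⁻¹ τ̂_x` and `e_w = τ̂_w − V_wx V_xx⁻¹ τ̂_x`,
`Cov(e_w, e_τ) = n₁⁻¹ S_{w,Y(1)∣x} + n₀⁻¹ S_{w,Y(0)∣x}`. -/
theorem statement13 (n n₁ n₀ J K : ℕ) (hn : 2 ≤ n) (hn₁ : 1 ≤ n₁) (hn₀ : 1 ≤ n₀)
    (hsum : n₁ + n₀ = n) (Y1 Y0 : Fin n → ℝ) (w : Fin n → Fin J → ℝ)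
    (x : Fin n → Fin K → ℝ) (hw : ∀ j, ∑ i, w i j = 0) (hx : ∀ k, ∑ i, x i k = 0)
    (hSx : IsUnit (covMat n K K x x).det) :
    ∀ j, crCov n n₁
        (fun s => tauHatVec n n₁ n₀ J w s j -
          ((Vmat n n₁ n₀ J K w x * (Vmat n n₁ n₀ K K x x)⁻¹) *ᵥ
            tauHatVec n n₁ n₀ K x s) j)
        (fun s => (tauHat n n₁ n₀ Y1 Y0 s - popMean n (fun i => Y1 i - Y0 i)) -
          VvecTau n n₁ n₀ K x Y1 Y0 ⬝ᵥ
            ((Vmat n n₁ n₀ K K x x)⁻¹ *ᵥ tauHatVec n n₁ n₀ K x s))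
      = (n₁ : ℝ)⁻¹ * (covVec n J w Y1 j -
            (covMat n J K w x *ᵥ ((covMat n K K x x)⁻¹ *ᵥ covVec n K x Y1)) j)
        + (n₀ : ℝ)⁻¹ * (covVec n J w Y0 j -
            (covMat n J K w x *ᵥ ((covMat n K K x x)⁻¹ *ᵥ covVec n K x Y0)) j) := by
  intro j
  have hn1 : n ≠ 1 := by omega
  have hn₁n : n₁ ≤ n := by omega
  have hc : (n₁ : ℝ) * (n - n₁) / (n * (n - 1)) * ((n₁ : ℝ)⁻¹ + (n₀ : ℝ)⁻¹) * (n - 1) = 1 := by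
    have hcast : (n : ℝ) = n₁ + n₀ := by exact_mod_cast hsum.symm
    have : (n : ℝ) - 1 ≠ 0 := sub_ne_zero.mpr (Nat.cast_ne_one.mpr hn1)
    field_simp
    rw [hcast]
    ring
  simp only [Vmat_mul_inv_Vmat (w := w) (by omega : n₁ ≠ 0) (by omega : n₀ ≠ 0) (by omega) hSx,
    tauHatVec_sub_mulVec_eq_sum_mem hw hx, tauHat_sub_dotProduct_mulVec_eq Y1 Y0 hx]
  rw [crCov_const_add_right hn₁n, crCov_sum_mem hn hn₁n, ← Finset.mul_sum,
    sum_sub_mulVec_eq_zero (hw j) hx, mul_zero, zero_mul, zero_div, sub_zero]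
  simp only [mul_assoc, ← Finset.mul_sum]
  rw [sum_residual_mul_sub_dotProduct hn1 (hw j) hx hSx, ← mul_assoc, ← mul_assoc, hc, one_mul,
    regCoef, ← Matrix.mulVec_mulVec, ← Matrix.mulVec_mulVec]
end
end

section
/- (Lemma A1) The law L_{K,a} is symmetric about zero (it is invariant under the map x ↦ −x) and unimodal about zero: it admits a density with respect to Lebesgue measure on ℝ that is an even function and is nonincreasing on [0,∞); equivalently, its cumulative distribution function is convex on (−∞,0] and concave on [0,∞). -/
/-!
Splitting off the first coordinate, the standard Gaussian measure on `ℝ^(n+1)` is the product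
of `N(0,1)` with the standard Gaussian measure on `ℝ^n`. Hence the conditioned first coordinate
has density proportional to `e^(-t²/2) · μ_n {x | t² + ‖x‖² ≤ a}`, a product of two
nonincreasing functions of `t²`: this gives evenness and unimodality at once, and evenness
together with the reflection invariance of Lebesgue measure gives the symmetry of the law.
-/

open MeasureTheory ProbabilityTheory Real
open scoped ENNReal

lemma map_neg_withDensity_of_even {G : Type*} [MeasurableSpace G] [InvolutiveNeg G]
    [MeasurableNeg G] (ν : Measure G) [ν.IsNegInvariant] {f : G → ℝ≥0∞}
    (hf : ∀ x, f (-x) = f x) :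
    (ν.withDensity f).map Neg.neg = ν.withDensity f := by
  ext A hA
  rw [Measure.map_apply measurable_neg hA, withDensity_apply _ (hA.preimage measurable_neg),
    withDensity_apply _ hA]
  simpa only [hf] using (Measure.measurePreserving_neg ν).setLIntegral_comp_preimage_emb
    (MeasurableEquiv.neg G).measurableEmbedding f A

namespace MeasureTheory.Measure

lemma map_fst_restrict_prod {α β : Type*} [MeasurableSpace α] [MeasurableSpace β]
    (ρ : Measure α) (σ : Measure β) [SFinite σ] {T : Set (α × β)} (hT : MeasurableSet T) :
    ((ρ.prod σ).restrict T).map Prod.fst = ρ.withDensity fun x => σ (Prod.mk x ⁻¹' T) := by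
  ext A hA
  have hA' : MeasurableSet ((Prod.fst : α × β → α) ⁻¹' A) := hA.preimage measurable_fst
  rw [Measure.map_apply measurable_fst hA, Measure.restrict_apply hA',
    Measure.prod_apply (hA'.inter hT), withDensity_apply _ hA, ← lintegral_indicator hA]
  congr 1 with x
  by_cases hx : x ∈ A <;> simp [hx, Set.preimage]

lemma map_eval_zero_restrict_pi {n : ℕ} {α : Type*} [MeasurableSpace α]
    (μ : Fin (n + 1) → Measure α) [∀ i, SigmaFinite (μ i)] {S : Set (Fin (n + 1) → α)}
    (hS : MeasurableSet S) :
    ((Measure.pi μ).restrict S).map (fun d => d 0) = (μ 0).withDensity fun t =>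
      Measure.pi (fun j : Fin n => μ j.succ) (Fin.cons (α := fun _ => α) t ⁻¹' S) := by
  let e := MeasurableEquiv.piFinSuccAbove (fun _ : Fin (n + 1) => α) 0
  have hT : MeasurableSet (e.symm ⁻¹' S) := e.symm.measurable hS
  have hS_eq : S = e ⁻¹' (e.symm ⁻¹' S) := (e.preimage_symm_preimage S).symm
  rw [show (fun d : Fin (n + 1) → α => d 0) = Prod.fst ∘ e from rfl, hS_eq,
    ← Measure.map_map measurable_fst e.measurable,
    ((measurePreserving_piFinSuccAbove μ 0).restrict_preimage hT).map_eq,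
    map_fst_restrict_prod _ _ hT]
  -- `e.symm (t, x) = Fin.cons t x` and `Fin.succAbove 0 = Fin.succ` hold definitionally
  rfl

end MeasureTheory.Measure

lemma gaussianReal_zero_one_eq_withDensity :
    gaussianReal 0 1 =
      volume.withDensity fun t => ENNReal.ofReal ((√(2 * π))⁻¹ * exp (-(t ^ 2) / 2)) := by
  rw [gaussianReal_of_var_ne_zero _ one_ne_zero]
  congr with t
  simp [gaussianPDF, gaussianPDFReal]

lemma exists_antitone_density_map_eval_zero_cond_ball (n : ℕ) (a : ℝ) :
    ∃ φ : ℝ → ℝ≥0∞, Antitone φ ∧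
      ((Measure.pi fun _ : Fin (n + 1) => gaussianReal 0 1)[|{d | ∑ j, d j ^ 2 ≤ a}]).map
        (fun d => d 0) = volume.withDensity fun t => φ (t ^ 2) := by
  set S : Set (Fin (n + 1) → ℝ) := {d | ∑ j, d j ^ 2 ≤ a}
  have hS : MeasurableSet S := measurableSet_le (by fun_prop) measurable_const
  set g : ℝ → ℝ≥0∞ := fun u => ENNReal.ofReal ((√(2 * π))⁻¹ * exp (-u / 2))
  set h : ℝ → ℝ≥0∞ := fun u =>
    Measure.pi (fun _ : Fin n => gaussianReal 0 1) {x | u + ∑ j, x j ^ 2 ≤ a}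
  have hg : Antitone g := fun u v huv => ENNReal.ofReal_le_ofReal (by gcongr)
  have hh : Antitone h := fun u v huv => measure_mono fun x hx => by
    simp only [Set.mem_ofPred_eq] at hx ⊢
    linarith
  have hslice : (fun t => Measure.pi (fun _ : Fin n => gaussianReal 0 1)
      (Fin.cons (α := fun _ => ℝ) t ⁻¹' S)) = fun t => h (t ^ 2) := by
    ext t
    simp [S, h, Fin.sum_univ_succ]
  refine ⟨((Measure.pi fun _ : Fin (n + 1) => gaussianReal 0 1) S)⁻¹ • (g * h),
    (hg.mul' hh).const_mul' _, ?_⟩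
  have hg_sq : Measurable fun t : ℝ => g (t ^ 2) := hg.measurable.comp (measurable_id.pow_const 2)
  have hh_sq : Measurable fun t : ℝ => h (t ^ 2) := hh.measurable.comp (measurable_id.pow_const 2)
  rw [ProbabilityTheory.cond, Measure.map_smul, Measure.map_eval_zero_restrict_pi _ hS, hslice,
    gaussianReal_zero_one_eq_withDensity, ← withDensity_mul _ hg_sq hh_sq,
    ← withDensity_smul _ (hg_sq.mul hh_sq)]
  rfl

theorem statement15_general (K : ℕ) (hK : 0 < K) (a : ℝ) :
    Measure.map (fun t : ℝ => -t)
        (Measure.map (fun d : Fin K → ℝ => d ⟨0, hK⟩)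
          ((Measure.pi fun _ : Fin K => gaussianReal 0 1)[|{d : Fin K → ℝ |
            ∑ j, (d j) ^ 2 ≤ a}]))
      = Measure.map (fun d : Fin K → ℝ => d ⟨0, hK⟩)
          ((Measure.pi fun _ : Fin K => gaussianReal 0 1)[|{d : Fin K → ℝ |
            ∑ j, (d j) ^ 2 ≤ a}]) ∧
    ∃ f : ℝ → ℝ≥0∞,
      Measure.map (fun d : Fin K → ℝ => d ⟨0, hK⟩)
          ((Measure.pi fun _ : Fin K => gaussianReal 0 1)[|{d : Fin K → ℝ |
            ∑ j, (d j) ^ 2 ≤ a}])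
        = MeasureTheory.volume.withDensity f ∧
      (∀ t : ℝ, f (-t) = f t) ∧
      (∀ s t : ℝ, 0 ≤ s → s ≤ t → f t ≤ f s) := by
  obtain ⟨n, rfl⟩ : ∃ n, K = n + 1 := Nat.exists_eq_add_one.mpr hK
  simp only [Fin.zero_eta]
  obtain ⟨φ, hφ, hlaw⟩ := exists_antitone_density_map_eval_zero_cond_ball n a
  have heven : ∀ t : ℝ, φ ((-t) ^ 2) = φ (t ^ 2) := fun t => by rw [neg_sq]
  refine ⟨?_, _, hlaw, heven, fun s t hs hst => hφ (pow_le_pow_left₀ hs hst 2)⟩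
  rw [hlaw]
  exact map_neg_withDensity_of_even volume heven

/-- Lemma A1: the law `L_{K,a}` — the law of the first coordinate of a
standard Gaussian vector on `ℝ^K` conditioned on the ball `∑ d_j² ≤ a` — is symmetric
about zero and unimodal about zero: it has a density with respect to Lebesgue measure
that is even and nonincreasing on `[0,∞)`. -/
theorem statement15 (K : ℕ) (hK : 0 < K) (a : ℝ) (ha : 0 < a) :
    Measure.map (fun t : ℝ => -t)
        (Measure.map (fun d : Fin K → ℝ => d ⟨0, hK⟩)
          ((Measure.pi fun _ : Fin K => gaussianReal 0 1)[|{d : Fin K → ℝ |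
            ∑ j, (d j) ^ 2 ≤ a}]))
      = Measure.map (fun d : Fin K → ℝ => d ⟨0, hK⟩)
          ((Measure.pi fun _ : Fin K => gaussianReal 0 1)[|{d : Fin K → ℝ |
            ∑ j, (d j) ^ 2 ≤ a}]) ∧
    ∃ f : ℝ → ℝ≥0∞,
      Measure.map (fun d : Fin K → ℝ => d ⟨0, hK⟩)
          ((Measure.pi fun _ : Fin K => gaussianReal 0 1)[|{d : Fin K → ℝ |
            ∑ j, (d j) ^ 2 ≤ a}])
        = MeasureTheory.volume.withDensity f ∧
      (∀ t : ℝ, f (-t) = f t) ∧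
      (∀ s t : ℝ, 0 ≤ s → s ≤ t → f t ≤ f s) :=
  statement15_general K hK a
end

section
/- (Lemma A2) Let ζ₀, ζ₁, ζ₂ be mutually independent real-valued random variables such that: (1) ζ₀ is symmetric about 0 (its law is invariant under negation) and unimodal about 0, meaning its cumulative distribution function is convex on (−∞,0) and concave on (0,∞); (2) the laws of ζ₁ and ζ₂ are symmetric about 0; (3) P(|ζ₁| ≤ c) ≥ P(|ζ₂| ≤ c) for every c ≥ 0. Then P(|ζ₀ + ζ₁| ≤ c) ≥ P(|ζ₀ + ζ₂| ≤ c) for every c ≥ 0. -/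
/-!
Conditioning on the independent summand, `P(|ζ₀ + ζ| ≤ c) = ∫ g dP_ζ` with
`g y = P(|ζ₀ + y| ≤ c) = F (c - y) + F (c + y) - 1`, `F` the CDF of `ζ₀`. The symmetry of `ζ₀`
makes `g` even, and the concavity of `F` on `[0, ∞)` (which also rules out atoms there) makes
`g` antitone on `[0, ∞)`. So `g y` is an antitone function of `|y|`, and by the layer-cake
formula its integral against the law of `ζ` grows when `|ζ|` becomes stochastically smaller.
-/

open MeasureTheory ProbabilityTheory Set Filter

theorem ConcaveOn.add_le_add_of_add_eq {s : Set ℝ} {f : ℝ → ℝ} (hf : ConcaveOn ℝ s f)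
    {u v p q : ℝ} (hu : u ∈ s) (hv : v ∈ s) (hp : p ∈ Icc u v)
    (hpq : p + q = u + v) : f u + f v ≤ f p + f q := by
  rcases hp.1.eq_or_lt with rfl | hlt
  · rw [show q = v by linarith]
  -- `p` and `q` are the convex combinations of `u, v` with swapped weights `θ, 1 - θ`
  set θ := (v - p) / (v - u)
  have hθ : θ * (v - u) = v - p := div_mul_cancel₀ _ (by linarith [hp.2])
  have hθ0 : 0 ≤ θ := div_nonneg (by linarith [hp.2]) (by linarith [hp.2])
  have hθ1 : θ ≤ 1 := div_le_one_of_le₀ (by linarith) (by linarith [hp.2])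
  have hfp := hf.2 hu hv hθ0 (sub_nonneg.2 hθ1) (by ring)
  have hfq := hf.2 hu hv (sub_nonneg.2 hθ1) hθ0 (by ring)
  simp only [smul_eq_mul] at hfp hfq
  rw [show θ * u + (1 - θ) * v = p by linear_combination -hθ] at hfp
  rw [show (1 - θ) * u + θ * v = q by linear_combination hθ - hpq] at hfq
  linarith

theorem IsLowerSet.exists_monotone_iUnion_Iic_eq {S : Set ℝ} (hS : IsLowerSet S)
    (hne : S.Nonempty) : ∃ u : ℕ → ℝ, Monotone u ∧ ⋃ n, Iic (u n) = S := by
  have hS_eq : ⋃ x ∈ S, Iic x = S :=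
    Subset.antisymm (iUnion₂_subset fun x hx _ hy => hS hy hx)
      fun x hx => mem_biUnion hx (mem_Iic.2 le_rfl)
  by_cases hbdd : BddAbove S
  · have hlub := isLUB_csSup hne hbdd
    by_cases hmem : sSup S ∈ S
    · exact ⟨fun _ => sSup S, monotone_const,
        (iUnion_const _).trans (hS_eq.symm.trans (hlub.biUnion_Iic_eq_Iic hmem)).symm⟩
    · refine ⟨fun n => sSup S - 1 / (n + 1), fun m n hmn => ?_, ?_⟩
      · change sSup S - 1 / ((m : ℝ) + 1) ≤ sSup S - 1 / ((n : ℝ) + 1)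
        gcongr
      · refine (iUnion_Iic_eq_Iio_of_lt_of_tendsto (F := atTop) (fun n => ?_) ?_).trans
          (hS_eq.symm.trans (hlub.biUnion_Iic_eq_Iio hmem)).symm
        · change sSup S - 1 / ((n : ℝ) + 1) < sSup S
          simp only [sub_lt_self_iff]; positivity
        · simpa using tendsto_one_div_add_atTop_nhds_zero_nat.const_sub (sSup S)
  · refine ⟨Nat.cast, Nat.mono_cast, ?_⟩
    rw [iUnion_Iic_of_not_bddAbove_range, eq_comm, eq_univ_iff_forall]
    · intro x
      obtain ⟨y, hy, hxy⟩ := not_bddAbove_iff.1 hbdd x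
      exact hS hxy.le hy
    · rintro ⟨b, hb⟩
      obtain ⟨n, hn⟩ := exists_nat_gt b
      exact (hb ⟨n, rfl⟩).not_gt hn

theorem measure_le_of_isLowerSet {ρ₁ ρ₂ : Measure ℝ} (h : ∀ x, ρ₂ (Iic x) ≤ ρ₁ (Iic x))
    {S : Set ℝ} (hS : IsLowerSet S) : ρ₂ S ≤ ρ₁ S := by
  rcases S.eq_empty_or_nonempty with rfl | hne
  · simp
  obtain ⟨u, hu, rfl⟩ := hS.exists_monotone_iUnion_Iic_eq hne
  have hmono : Monotone fun n => Iic (u n) := fun _ _ hmn => Iic_subset_Iic.2 (hu hmn)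
  rw [hmono.measure_iUnion, hmono.measure_iUnion]
  exact iSup_mono fun n => h (u n)

theorem lintegral_ofReal_le_of_antitone {ρ₁ ρ₂ : Measure ℝ} (h : ∀ x, ρ₂ (Iic x) ≤ ρ₁ (Iic x))
    {f : ℝ → ℝ} (hf₀ : 0 ≤ f) (hf : Antitone f) :
    ∫⁻ x, ENNReal.ofReal (f x) ∂ρ₂ ≤ ∫⁻ x, ENNReal.ofReal (f x) ∂ρ₁ := by
  rw [lintegral_eq_lintegral_meas_lt _ (ae_of_all _ hf₀) hf.measurable.aemeasurable,
    lintegral_eq_lintegral_meas_lt _ (ae_of_all _ hf₀) hf.measurable.aemeasurable]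
  exact lintegral_mono fun t =>
    measure_le_of_isLowerSet h fun _ _ hab hb => lt_of_lt_of_le hb (hf hab)

theorem lintegral_ofReal_le_of_even_of_antitoneOn {ν₁ ν₂ : Measure ℝ}
    (h : ∀ r, 0 ≤ r → ν₂ {y | |y| ≤ r} ≤ ν₁ {y | |y| ≤ r}) {f : ℝ → ℝ} (hf₀ : 0 ≤ f)
    (heven : Function.Even f) (hf : AntitoneOn f (Ici 0)) :
    ∫⁻ y, ENNReal.ofReal (f y) ∂ν₂ ≤ ∫⁻ y, ENNReal.ofReal (f y) ∂ν₁ := by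
  -- `f` factors through `|·|` as the antitone function `r ↦ f (max r 0)`
  set g : ℝ → ℝ := fun r => f (max r 0)
  have hg : Antitone g := fun a b hab =>
    hf (le_max_right a 0) (le_max_right b 0) (max_le_max_right 0 hab)
  have hfg : ∀ y, f y = g |y| := fun y => by
    simp only [g, max_eq_left (abs_nonneg y)]
    rcases abs_choice y with hy | hy <;> rw [hy]
    exact (heven y).symm
  have hmap : ∀ ν : Measure ℝ, ∫⁻ y, ENNReal.ofReal (f y) ∂ν =
      ∫⁻ r, ENNReal.ofReal (g r) ∂(ν.map (|·|)) := fun ν => by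
    rw [lintegral_map (f := fun r => ENNReal.ofReal (g r))
      (ENNReal.measurable_ofReal.comp hg.measurable) measurable_abs]
    simp only [hfg]
  rw [hmap, hmap]
  refine lintegral_ofReal_le_of_antitone (fun r => ?_) (fun r => hf₀ (max r 0)) hg
  rw [Measure.map_apply measurable_abs measurableSet_Iic,
    Measure.map_apply measurable_abs measurableSet_Iic]
  rcases le_or_gt 0 r with hr | hr
  · exact h r hr
  · have : (|·|) ⁻¹' Iic r = (∅ : Set ℝ) :=
      eq_empty_of_forall_notMem fun y hy => (abs_nonneg y).not_gt (lt_of_le_of_lt hy hr)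
    simp [this]

theorem measure_singleton_eq_zero_of_concaveOn_cdf {ν : Measure ℝ} [IsProbabilityMeasure ν]
    (hF : ConcaveOn ℝ (Ici 0) (cdf ν)) {t : ℝ} (ht : 0 < t) : ν {t} = 0 := by
  have hcont : ContinuousAt (cdf ν) t :=
    (hF.continuousOn_interior t (by rwa [interior_Ici])).continuousAt
      (by rw [interior_Ici]; exact isOpen_Ioi.mem_nhds ht)
  rw [← measure_cdf ν, StieltjesFunction.measure_singleton,
    hcont.continuousWithinAt.leftLim_eq, sub_self, ENNReal.ofReal_zero]

section SymmetricLaw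

variable {ν : Measure ℝ} [IsProbabilityMeasure ν] [ν.IsNegInvariant]

theorem measureReal_Iio_eq_one_sub_cdf_neg (t : ℝ) : ν.real (Iio t) = 1 - cdf ν (-t) := by
  rw [measureReal_def, ← Measure.measure_neg, ← measureReal_def, neg_Iio, ← compl_Iic,
    probReal_compl_eq_one_sub measurableSet_Iic, cdf_eq_real]

theorem one_le_cdf_add_cdf_neg (t : ℝ) : 1 ≤ cdf ν t + cdf ν (-t) := by
  have := measureReal_mono (μ := ν) (Iio_subset_Iic_self (a := t))
  rw [measureReal_Iio_eq_one_sub_cdf_neg, ← cdf_eq_real] at this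
  linarith

theorem cdf_add_cdf_neg_eq_one_of_measure_singleton {t : ℝ} (ht : ν {t} = 0) :
    cdf ν t + cdf ν (-t) = 1 := by
  have := measureReal_congr (Iio_ae_eq_Iic' ht)
  rw [measureReal_Iio_eq_one_sub_cdf_neg, ← cdf_eq_real] at this
  linarith

theorem measureReal_abs_add_le_eq {c : ℝ} (hc : 0 ≤ c) (y : ℝ) :
    ν.real {x | |x + y| ≤ c} = cdf ν (c - y) + cdf ν (c + y) - 1 := by
  have hset : {x | |x + y| ≤ c} = Iic (c - y) \ Iio (-c - y) := by
    ext x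
    simp only [mem_ofPred_eq, abs_le, Set.mem_sdiff, mem_Iic, mem_Iio, not_lt]
    constructor <;> intro h <;> constructor <;> linarith [h.1, h.2]
  rw [hset, measureReal_sdiff (Iio_subset_Iic (by linarith)) measurableSet_Iio,
    measureReal_Iio_eq_one_sub_cdf_neg, ← cdf_eq_real, neg_sub_left, neg_neg, add_comm y c]
  ring

theorem even_measureReal_abs_add_le {c : ℝ} (hc : 0 ≤ c) :
    Function.Even fun y => ν.real {x | |x + y| ≤ c} := fun y => by
  dsimp only
  rw [measureReal_abs_add_le_eq hc, measureReal_abs_add_le_eq hc, sub_neg_eq_add,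
    ← sub_eq_add_neg]
  ring

theorem antitoneOn_cdf_sub_add_cdf_add (hF : ConcaveOn ℝ (Ici 0) (cdf ν)) {c : ℝ}
    (hc : 0 ≤ c) :
    AntitoneOn (fun y => cdf ν (c - y) + cdf ν (c + y)) (Ici 0) := by
  rw [← Icc_union_Ici_eq_Ici hc]
  refine AntitoneOn.union_right ?_ ?_ (isGreatest_Icc hc) isLeast_Ici
  · intro y hy y' hy' hyy'
    exact hF.add_le_add_of_add_eq (mem_Ici.2 (by linarith [hy'.2]))
      (mem_Ici.2 (by linarith [hy'.1])) ⟨by linarith, by linarith [hy.1]⟩ (by ring)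
  · intro y hy y' hy' hyy'
    rcases hyy'.eq_or_lt with rfl | hlt
    · exact le_rfl
    -- beyond `c` the left end `c - y` is negative; reflect it through the symmetry of `ν`
    have hy_refl := one_le_cdf_add_cdf_neg (ν := ν) (y - c)
    have hy'_refl := cdf_add_cdf_neg_eq_one_of_measure_singleton (ν := ν)
      (measure_singleton_eq_zero_of_concaveOn_cdf hF (t := y' - c) (by linarith [mem_Ici.1 hy]))
    rw [neg_sub] at hy_refl hy'_refl
    have := hF.add_le_add_of_add_eq (u := y - c) (v := c + y') (p := y' - c) (q := c + y)
      (mem_Ici.2 (by linarith [mem_Ici.1 hy])) (mem_Ici.2 (by linarith [mem_Ici.1 hy]))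
      ⟨by linarith, by linarith⟩ (by ring)
    dsimp only
    linarith

theorem antitoneOn_measureReal_abs_add_le (hF : ConcaveOn ℝ (Ici 0) (cdf ν)) {c : ℝ}
    (hc : 0 ≤ c) :
    AntitoneOn (fun y => ν.real {x | |x + y| ≤ c}) (Ici 0) := fun y hy y' hy' hyy' => by
  have := antitoneOn_cdf_sub_add_cdf_add hF hc hy hy' hyy'
  dsimp only at this ⊢
  rw [measureReal_abs_add_le_eq hc, measureReal_abs_add_le_eq hc]
  linarith

end SymmetricLaw

theorem ProbabilityTheory.IndepFun.measure_mem_eq_lintegral {Ω α β : Type*}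
    [MeasurableSpace Ω] [MeasurableSpace α] [MeasurableSpace β] {μ : Measure Ω} [IsFiniteMeasure μ]
    {X : Ω → α} {Y : Ω → β} (hXY : IndepFun X Y μ) (hX : Measurable X) (hY : Measurable Y)
    {s : Set (α × β)} (hs : MeasurableSet s) :
    μ {ω | (X ω, Y ω) ∈ s} = ∫⁻ y, μ.map X {x | (x, y) ∈ s} ∂(μ.map Y) := by
  change μ ((fun ω => (X ω, Y ω)) ⁻¹' s) = ∫⁻ y, μ.map X ((fun x => (x, y)) ⁻¹' s) ∂(μ.map Y)
  rw [← Measure.prod_apply_symm hs,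
    ← (indepFun_iff_map_prod_eq_prod_map_map hX.aemeasurable hY.aemeasurable).1 hXY,
    Measure.map_apply (hX.prodMk hY) hs]

theorem statement16_general {Ω : Type*} [MeasurableSpace Ω] (μ : Measure Ω)
    [IsProbabilityMeasure μ] (ζ₀ ζ₁ ζ₂ : Ω → ℝ)
    (hm0 : Measurable ζ₀) (hm1 : Measurable ζ₁) (hm2 : Measurable ζ₂)
    (hindep : iIndepFun ![ζ₀, ζ₁, ζ₂] μ)
    (hsym0 : Measure.map (fun ω => -ζ₀ ω) μ = Measure.map ζ₀ μ)
    (hconcave : ConcaveOn ℝ (Set.Ici (0 : ℝ))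
      (fun c => (μ {ω | ζ₀ ω ≤ c}).toReal))
    (hdom : ∀ c : ℝ, 0 ≤ c → μ {ω | |ζ₂ ω| ≤ c} ≤ μ {ω | |ζ₁ ω| ≤ c}) :
    ∀ c : ℝ, 0 ≤ c → μ {ω | |ζ₀ ω + ζ₂ ω| ≤ c} ≤ μ {ω | |ζ₀ ω + ζ₁ ω| ≤ c} := by
  intro c hc
  set ν := μ.map ζ₀
  have : IsProbabilityMeasure ν := Measure.isProbabilityMeasure_map hm0.aemeasurable
  have : ν.IsNegInvariant :=
    ⟨by rw [Measure.neg, Measure.map_map measurable_neg hm0]; exact hsym0⟩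
  have hcdf : ⇑(cdf ν) = fun t => (μ {ω | ζ₀ ω ≤ t}).toReal := by
    ext t
    rw [cdf_eq_real, measureReal_def, Measure.map_apply hm0 measurableSet_Iic]
    rfl
  have habs : ∀ r, MeasurableSet {y : ℝ | |y| ≤ r} := fun r =>
    measurableSet_Iic.preimage measurable_abs
  have hcond : ∀ ζ, Measurable ζ → IndepFun ζ₀ ζ μ → μ {ω | |ζ₀ ω + ζ ω| ≤ c} =
      ∫⁻ y, ENNReal.ofReal (ν.real {x | |x + y| ≤ c}) ∂(μ.map ζ) := fun ζ hζ h0ζ => by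
    refine (h0ζ.measure_mem_eq_lintegral hm0 hζ (s := {p | |p.1 + p.2| ≤ c})
      (measurableSet_le (by fun_prop) measurable_const)).trans ?_
    exact lintegral_congr fun y => (ofReal_measureReal).symm
  rw [hcond ζ₂ hm2 (hindep.indepFun (by decide : (0 : Fin 3) ≠ 2)),
    hcond ζ₁ hm1 (hindep.indepFun (by decide : (0 : Fin 3) ≠ 1))]
  refine lintegral_ofReal_le_of_even_of_antitoneOn (fun r hr => ?_)
    (fun y => measureReal_nonneg) (even_measureReal_abs_add_le hc)
    (antitoneOn_measureReal_abs_add_le (hcdf ▸ hconcave) hc)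
  rw [Measure.map_apply hm2 (habs r), Measure.map_apply hm1 (habs r)]
  exact hdom r hr

/-- Lemma A2: if `ζ₀, ζ₁, ζ₂` are mutually independent real random
variables, `ζ₀` is symmetric about `0` and unimodal about `0` (its CDF is convex on
`(−∞,0]` and concave on `[0,∞)`), `ζ₁` and `ζ₂` are symmetric about `0`, and
`P(|ζ₁| ≤ c) ≥ P(|ζ₂| ≤ c)` for all `c ≥ 0`, then
`P(|ζ₀ + ζ₁| ≤ c) ≥ P(|ζ₀ + ζ₂| ≤ c)` for all `c ≥ 0`. -/
theorem statement16 {Ω : Type*} [MeasurableSpace Ω] (μ : Measure Ω)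
    [IsProbabilityMeasure μ] (ζ₀ ζ₁ ζ₂ : Ω → ℝ)
    (hm0 : Measurable ζ₀) (hm1 : Measurable ζ₁) (hm2 : Measurable ζ₂)
    (hindep : iIndepFun ![ζ₀, ζ₁, ζ₂] μ)
    (hsym0 : Measure.map (fun ω => -ζ₀ ω) μ = Measure.map ζ₀ μ)
    (hconvex : ConvexOn ℝ (Set.Iic (0 : ℝ))
      (fun c => (μ {ω | ζ₀ ω ≤ c}).toReal))
    (hconcave : ConcaveOn ℝ (Set.Ici (0 : ℝ))
      (fun c => (μ {ω | ζ₀ ω ≤ c}).toReal))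
    (hsym1 : Measure.map (fun ω => -ζ₁ ω) μ = Measure.map ζ₁ μ)
    (hsym2 : Measure.map (fun ω => -ζ₂ ω) μ = Measure.map ζ₂ μ)
    (hdom : ∀ c : ℝ, 0 ≤ c → μ {ω | |ζ₂ ω| ≤ c} ≤ μ {ω | |ζ₁ ω| ≤ c}) :
    ∀ c : ℝ, 0 ≤ c → μ {ω | |ζ₀ ω + ζ₂ ω| ≤ c} ≤ μ {ω | |ζ₀ ω + ζ₁ ω| ≤ c} :=
  statement16_general μ ζ₀ ζ₁ ζ₂ hm0 hm1 hm2 hindep hsym0 hconcave hdom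
end

section
/- (Lemma A3) Let ε and L be independent real-valued random variables with ε distributed as the standard normal N(0,1) and L distributed as L_{K,a}. For all nonnegative reals b₁ ≤ c₁ and b₂ ≤ c₂ and every c ≥ 0, P(|b₁ε + b₂L| ≤ c) ≥ P(|c₁ε + c₂L| ≤ c); consequently, for every α ∈ (0,1), the symmetric 1−α quantile range of b₁ε + b₂L is narrower than or equal to that of c₁ε + c₂L. -/
/-!
Both laws are symmetric unimodal in the interval sense: a closed interval of fixed length
loses mass when its centre moves away from `0`. For `N(0,1)` this comes from its even density,
decreasing in `|x|`. Under the conditioned measure, the first coordinate has density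
`x ↦ φ(x) · P(∑_{j ≥ 2} d_j² ≤ a - x²)` up to a constant, i.e. a mixture over the other
coordinates of truncated Gaussian densities, each again even and decreasing in `|x|`.

Given `ε = x`, the event `|c₁ x + c₂ L| ≤ c` is an interval for `L` of fixed half-length
`c / c₂` centred at `-c₁ x / c₂`; lowering `c₁` to `b₁` moves the centre towards `0` and so
raises the probability. The same argument in `ε` then lowers `c₂` to `b₂`. The quantile
comparison follows because the distribution functions of `|·|` are ordered.
-/

open MeasureTheory ProbabilityTheory Set Metric Filter Topology
open scoped ENNReal NNReal

def IsSymmDecreasing (f : ℝ → ℝ≥0∞) : Prop := ∀ ⦃x y : ℝ⦄, |x| ≤ |y| → f y ≤ f x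

def IsSymmUnimodal (ρ : Measure ℝ) : Prop :=
  ∀ ⦃m m' : ℝ⦄ (r : ℝ), |m| ≤ |m'| → ρ (closedBall m' r) ≤ ρ (closedBall m r)

lemma abs_le_abs_add_sub_of_mem_closedBall_diff {m m' r x : ℝ} (h : |m| ≤ |m'|)
    (hx : x ∈ closedBall m r \ closedBall m' r) : |x| ≤ |m + m' - x| := by
  simp only [Set.mem_sdiff, mem_closedBall, Real.dist_eq, not_le] at hx
  have hcloser : (x - m) ^ 2 < (x - m') ^ 2 := by
    rw [← sq_abs (x - m), ← sq_abs (x - m')]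
    gcongr
    exact hx.1.trans_lt hx.2
  have hsmaller : m ^ 2 ≤ m' ^ 2 := by
    rw [← sq_abs m, ← sq_abs m']
    gcongr
  -- the goal is `0 ≤ (m' + m) * (m' + m - 2 * x)`, and both factors have the sign of `m' - m`
  have hsign₁ : 0 < (m' - m) * (m' + m - 2 * x) := by nlinarith
  have hsign₂ : 0 ≤ (m' - m) * (m' + m) := by nlinarith
  have : 0 ≤ (m' + m) * (m' + m - 2 * x) :=
    nonneg_of_mul_nonneg_right (by nlinarith [mul_nonneg hsign₁.le hsign₂])
      (pow_two_pos_of_ne_zero (left_ne_zero_of_mul hsign₁.ne'))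
  rw [← sq_le_sq₀ (abs_nonneg _) (abs_nonneg _), sq_abs, sq_abs]
  nlinarith

lemma preimage_sub_left_closedBall (s x r : ℝ) :
    (fun y => s - y) ⁻¹' closedBall x r = closedBall (s - x) r := by
  ext y
  simp only [mem_preimage, mem_closedBall, Real.dist_eq]
  rw [← abs_neg]; ring_nf

lemma IsSymmDecreasing.isSymmUnimodal_withDensity {f : ℝ → ℝ≥0∞} (hf : IsSymmDecreasing f) :
    IsSymmUnimodal (volume.withDensity f) := by
  intro m m' r h
  -- reflection in the midpoint of `m` and `m'` swaps the two balls
  set A := closedBall m r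
  set B := closedBall m' r
  have hreflect : ∫⁻ x in B \ A, f x = ∫⁻ x in A \ B, f (m + m' - x) := by
    have hpre : (fun x => m + m' - x) ⁻¹' (B \ A) = A \ B := by
      simp only [A, B, preimage_sdiff, preimage_sub_left_closedBall, add_sub_cancel_left,
        add_sub_cancel_right]
    rw [← hpre, (Measure.measurePreserving_sub_left volume (m + m')).setLIntegral_comp_preimage_emb
      (measurableEmbedding_subLeft _)]
  rw [withDensity_apply _ measurableSet_closedBall,
    withDensity_apply _ measurableSet_closedBall,
    ← lintegral_inter_add_sdiff f B measurableSet_closedBall (B := A),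
    ← lintegral_inter_add_sdiff f A measurableSet_closedBall (B := B), inter_comm, hreflect]
  refine add_le_add le_rfl
    (setLIntegral_mono' (measurableSet_closedBall.diff measurableSet_closedBall) fun x hx => ?_)
  exact hf (abs_le_abs_add_sub_of_mem_closedBall_diff h hx)

lemma isSymmDecreasing_gaussianPDF (v : ℝ≥0) : IsSymmDecreasing (gaussianPDF 0 v) := by
  intro x y h
  refine ENNReal.ofReal_le_ofReal (mul_le_mul_of_nonneg_left (Real.exp_le_exp.2 ?_) (by positivity))
  have : x ^ 2 ≤ y ^ 2 := sq_le_sq.2 h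
  rw [sub_zero, sub_zero]
  exact div_le_div_of_nonneg_right (neg_le_neg this) (by positivity)

lemma IsSymmDecreasing.indicator {f : ℝ → ℝ≥0∞} (hf : IsSymmDecreasing f) (R : ℝ) :
    IsSymmDecreasing ({x : ℝ | x ^ 2 ≤ R}.indicator f) := by
  intro x y h
  by_cases hy : y ^ 2 ≤ R
  · have hx : x ^ 2 ≤ R := (sq_le_sq.2 h).trans hy
    simpa [indicator_of_mem, hx, hy] using hf h
  · simp [indicator_of_notMem, hy]

lemma isSymmUnimodal_dirac_zero : IsSymmUnimodal (Measure.dirac 0) := by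
  intro m m' r h
  rw [Measure.dirac_apply' _ measurableSet_closedBall,
    Measure.dirac_apply' _ measurableSet_closedBall]
  by_cases h0 : (0 : ℝ) ∈ closedBall m' r
  · have : (0 : ℝ) ∈ closedBall m r := by
      rw [mem_closedBall, dist_comm, dist_zero_right] at h0 ⊢
      exact h.trans h0
    simp [indicator_of_mem, h0, this]
  · simp [indicator_of_notMem h0]

lemma isSymmUnimodal_gaussianReal (v : ℝ≥0) : IsSymmUnimodal (gaussianReal 0 v) := by
  rcases eq_or_ne v 0 with rfl | hv
  · rw [gaussianReal_zero_var]
    exact isSymmUnimodal_dirac_zero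
  · rw [gaussianReal_of_var_ne_zero 0 hv]
    exact (isSymmDecreasing_gaussianPDF v).isSymmUnimodal_withDensity

lemma measurableSet_sum_sq_le {ι : Type*} [Fintype ι] (a : ℝ) :
    MeasurableSet {d : ι → ℝ | ∑ j, d j ^ 2 ≤ a} :=
  measurableSet_le (by fun_prop) measurable_const

lemma map_eval_cond_pi_gaussianReal_apply {n : ℕ} (i : Fin (n + 1)) {v : ℝ≥0} (hv : v ≠ 0)
    (a : ℝ) {A : Set ℝ} (hA : MeasurableSet A) :
    ((Measure.pi fun _ => gaussianReal 0 v)[|{d : Fin (n + 1) → ℝ | ∑ j, d j ^ 2 ≤ a}]).map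
        (fun d => d i) A
      = (Measure.pi (fun _ => gaussianReal 0 v) {d : Fin (n + 1) → ℝ | ∑ j, d j ^ 2 ≤ a})⁻¹ *
        ∫⁻ y : Fin n → ℝ, volume.withDensity
          ({x | x ^ 2 ≤ a - ∑ j, y j ^ 2}.indicator (gaussianPDF 0 v)) A
          ∂(Measure.pi fun _ => gaussianReal 0 v) := by
  have hS := measurableSet_sum_sq_le (ι := Fin (n + 1)) a
  rw [Measure.map_apply (measurable_pi_apply i) hA, cond_apply hS]
  congr 1
  have hmp := (measurePreserving_piFinSuccAbove (fun _ => gaussianReal 0 v) i).symm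
  have hSA := hS.inter (measurable_pi_apply i hA)
  rw [← hmp.measure_preimage hSA.nullMeasurableSet,
    Measure.prod_apply_symm (hSA.preimage hmp.measurable)]
  refine lintegral_congr fun y => ?_
  have hC : MeasurableSet {x : ℝ | x ^ 2 ≤ a - ∑ j, y j ^ 2} :=
    measurableSet_le (by fun_prop) measurable_const
  rw [gaussianReal_apply 0 hv, withDensity_apply _ hA, lintegral_indicator hC,
    Measure.restrict_restrict hC]
  congr 2
  ext x
  simp [Fin.sum_univ_succAbove _ i, MeasurableEquiv.piFinSuccAbove_symm_apply, le_sub_iff_add_le]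

lemma isSymmUnimodal_map_eval_cond_pi_gaussianReal {n : ℕ} (i : Fin (n + 1)) {v : ℝ≥0}
    (hv : v ≠ 0) (a : ℝ) :
    IsSymmUnimodal (((Measure.pi fun _ => gaussianReal 0 v)[|{d : Fin (n + 1) → ℝ |
      ∑ j, d j ^ 2 ≤ a}]).map (fun d => d i)) := by
  intro m m' r h
  rw [map_eval_cond_pi_gaussianReal_apply i hv a measurableSet_closedBall,
    map_eval_cond_pi_gaussianReal_apply i hv a measurableSet_closedBall]
  refine mul_le_mul_right (lintegral_mono fun y => ?_) _
  exact ((isSymmDecreasing_gaussianPDF v).indicator _).isSymmUnimodal_withDensity r h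

lemma IsSymmUnimodal.measure_abs_add_mul_le {ρ : Measure ℝ} (hρ : IsSymmUnimodal ρ)
    {u u' δ : ℝ} (hδ : 0 ≤ δ) (h : |u| ≤ |u'|) (c : ℝ) :
    ρ {y | |u' + δ * y| ≤ c} ≤ ρ {y | |u + δ * y| ≤ c} := by
  rcases hδ.eq_or_lt with rfl | hδ
  · simp only [zero_mul, add_zero]
    exact measure_mono fun _ hy => h.trans hy
  · have hball : ∀ w : ℝ, {y | |w + δ * y| ≤ c} = closedBall (-(w / δ)) (c / δ) := by
      intro w
      ext y
      have : w + δ * y = δ * (y - -(w / δ)) := by field_simp; ring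
      rw [mem_ofPred_eq, mem_closedBall, Real.dist_eq, this, abs_mul, abs_of_pos hδ,
        le_div_iff₀' hδ]
    rw [hball, hball]
    refine hρ _ ?_
    simp only [abs_neg, abs_div]
    gcongr

def linearStrip (β δ c : ℝ) : Set (ℝ × ℝ) := {p | |β * p.1 + δ * p.2| ≤ c}

lemma measurableSet_linearStrip (β δ c : ℝ) : MeasurableSet (linearStrip β δ c) :=
  measurableSet_le (by fun_prop) measurable_const

lemma prod_linearStrip_le_prod_linearStrip {γ ρ : Measure ℝ} [SFinite γ] [SFinite ρ]
    (hγ : IsSymmUnimodal γ) (hρ : IsSymmUnimodal ρ) {b₁ c₁ b₂ c₂ : ℝ} (hb₁ : 0 ≤ b₁) (h₁ : b₁ ≤ c₁)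
    (hb₂ : 0 ≤ b₂) (h₂ : b₂ ≤ c₂) (c : ℝ) :
    (γ.prod ρ) (linearStrip c₁ c₂ c) ≤ (γ.prod ρ) (linearStrip b₁ b₂ c) := by
  have habs {β β' : ℝ} (hβ : 0 ≤ β) (hββ' : β ≤ β') (x : ℝ) : |β * x| ≤ |β' * x| := by
    rw [abs_mul, abs_mul, abs_of_nonneg hβ, abs_of_nonneg (hβ.trans hββ')]
    gcongr
  calc (γ.prod ρ) (linearStrip c₁ c₂ c)
      = ∫⁻ x, ρ {y | |c₁ * x + c₂ * y| ≤ c} ∂γ := Measure.prod_apply (measurableSet_linearStrip ..)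
    _ ≤ ∫⁻ x, ρ {y | |b₁ * x + c₂ * y| ≤ c} ∂γ :=
        lintegral_mono fun x => hρ.measure_abs_add_mul_le (hb₂.trans h₂) (habs hb₁ h₁ x) c
    _ = (γ.prod ρ) (linearStrip b₁ c₂ c) := (Measure.prod_apply (measurableSet_linearStrip ..)).symm
    _ = ∫⁻ y, γ {x | |c₂ * y + b₁ * x| ≤ c} ∂ρ := by
        rw [Measure.prod_apply_symm (measurableSet_linearStrip ..)]
        simp only [linearStrip, preimage_ofPred_eq, add_comm]
    _ ≤ ∫⁻ y, γ {x | |b₂ * y + b₁ * x| ≤ c} ∂ρ :=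
        lintegral_mono fun y => hγ.measure_abs_add_mul_le hb₁ (habs hb₂ h₂ y) c
    _ = (γ.prod ρ) (linearStrip b₁ b₂ c) := by
        rw [Measure.prod_apply_symm (measurableSet_linearStrip ..)]
        simp only [linearStrip, preimage_ofPred_eq, add_comm]

lemma tendsto_measure_abs_le_atTop {Ω : Type*} [MeasurableSpace Ω] (μ : Measure Ω) (X : Ω → ℝ) :
    Tendsto (fun c : ℝ => μ {ω | |X ω| ≤ c}) atTop (𝓝 (μ univ)) := by
  have hmono : Monotone fun c : ℝ => {ω | |X ω| ≤ c} := fun _ _ h _ hω => le_trans hω h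
  have hunion : ⋃ c : ℝ, {ω | |X ω| ≤ c} = univ :=
    iUnion_eq_univ_iff.2 fun ω => ⟨|X ω|, mem_ofPred.2 le_rfl⟩
  rw [← hunion]
  exact tendsto_measure_iUnion_atTop hmono

theorem statement17_general (K : ℕ) (hK : 0 < K) (a : ℝ)
    {Ω : Type*} [MeasurableSpace Ω] (μ : Measure Ω) [IsProbabilityMeasure μ]
    (ε L : Ω → ℝ) (hmε : Measurable ε) (hmL : Measurable L)
    (hlawε : Measure.map ε μ = gaussianReal 0 1)
    (hlawL : Measure.map L μ
      = Measure.map (fun d : Fin K → ℝ => d ⟨0, hK⟩)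
          ((Measure.pi fun _ : Fin K => gaussianReal 0 1)[|{d : Fin K → ℝ |
            ∑ j, (d j) ^ 2 ≤ a}]))
    (hindep : IndepFun ε L μ)
    (b₁ c₁ b₂ c₂ : ℝ) (hb₁ : 0 ≤ b₁) (h₁ : b₁ ≤ c₁) (hb₂ : 0 ≤ b₂) (h₂ : b₂ ≤ c₂) :
    (∀ c : ℝ, 0 ≤ c →
        μ {ω | |c₁ * ε ω + c₂ * L ω| ≤ c} ≤ μ {ω | |b₁ * ε ω + b₂ * L ω| ≤ c}) ∧
      ∀ α : ℝ, α ∈ Set.Ioo (0 : ℝ) 1 →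
        sInf {c : ℝ | 0 ≤ c ∧ 1 - α ≤ (μ {ω | |b₁ * ε ω + b₂ * L ω| ≤ c}).toReal}
          ≤ sInf {c : ℝ | 0 ≤ c ∧
              1 - α ≤ (μ {ω | |c₁ * ε ω + c₂ * L ω| ≤ c}).toReal} := by
  obtain ⟨n, rfl⟩ : ∃ n, K = n + 1 := ⟨K - 1, by omega⟩
  have hγ : IsSymmUnimodal (μ.map ε) := hlawε ▸ isSymmUnimodal_gaussianReal 1
  have hρ : IsSymmUnimodal (μ.map L) :=
    hlawL ▸ isSymmUnimodal_map_eval_cond_pi_gaussianReal _ one_ne_zero a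
  have hlaw : μ.map (fun ω => (ε ω, L ω)) = (μ.map ε).prod (μ.map L) :=
    (indepFun_iff_map_prod_eq_prod_map_map hmε.aemeasurable hmL.aemeasurable).1 hindep
  have hstrip (β δ c : ℝ) :
      μ {ω | |β * ε ω + δ * L ω| ≤ c} = ((μ.map ε).prod (μ.map L)) (linearStrip β δ c) := by
    rw [← hlaw, Measure.map_apply (hmε.prodMk hmL) (measurableSet_linearStrip ..)]
    rfl
  have hcdf (c : ℝ) :
      μ {ω | |c₁ * ε ω + c₂ * L ω| ≤ c} ≤ μ {ω | |b₁ * ε ω + b₂ * L ω| ≤ c} := by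
    rw [hstrip, hstrip]
    exact prod_linearStrip_le_prod_linearStrip hγ hρ hb₁ h₁ hb₂ h₂ c
  refine ⟨fun c _ => hcdf c, fun α hα => ?_⟩
  have hlt : ENNReal.ofReal (1 - α) < μ univ := by
    rw [measure_univ, ENNReal.ofReal_lt_one]
    linarith [hα.1]
  obtain ⟨k, hk0, hk⟩ := ((eventually_ge_atTop 0).and
    ((tendsto_measure_abs_le_atTop μ _).eventually_const_lt hlt)).exists
  refine csInf_le_csInf ⟨0, fun _ hc => hc.1⟩
    ⟨k, hk0, (ENNReal.ofReal_le_iff_le_toReal (measure_ne_top μ _)).1 hk.le⟩ fun c hc => ?_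
  exact ⟨hc.1, hc.2.trans (ENNReal.toReal_mono (measure_ne_top μ _) (hcdf c))⟩

/-- Lemma A3: if `ε ~ N(0,1)` and `L ~ L_{K,a}` are independent, then
for nonnegative `b₁ ≤ c₁`, `b₂ ≤ c₂` and every `c ≥ 0`,
`P(|b₁ε + b₂L| ≤ c) ≥ P(|c₁ε + c₂L| ≤ c)`; consequently for every `α ∈ (0,1)` the
symmetric `1−α` quantile range of `b₁ε + b₂L` is narrower than or equal to that of
`c₁ε + c₂L`. -/
theorem statement17 (K : ℕ) (hK : 0 < K) (a : ℝ) (ha : 0 < a)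
    {Ω : Type*} [MeasurableSpace Ω] (μ : Measure Ω) [IsProbabilityMeasure μ]
    (ε L : Ω → ℝ) (hmε : Measurable ε) (hmL : Measurable L)
    (hlawε : Measure.map ε μ = gaussianReal 0 1)
    (hlawL : Measure.map L μ
      = Measure.map (fun d : Fin K → ℝ => d ⟨0, hK⟩)
          ((Measure.pi fun _ : Fin K => gaussianReal 0 1)[|{d : Fin K → ℝ |
            ∑ j, (d j) ^ 2 ≤ a}]))
    (hindep : IndepFun ε L μ)
    (b₁ c₁ b₂ c₂ : ℝ) (hb₁ : 0 ≤ b₁) (h₁ : b₁ ≤ c₁) (hb₂ : 0 ≤ b₂) (h₂ : b₂ ≤ c₂) :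
    (∀ c : ℝ, 0 ≤ c →
        μ {ω | |c₁ * ε ω + c₂ * L ω| ≤ c} ≤ μ {ω | |b₁ * ε ω + b₂ * L ω| ≤ c}) ∧
      ∀ α : ℝ, α ∈ Set.Ioo (0 : ℝ) 1 →
        sInf {c : ℝ | 0 ≤ c ∧ 1 - α ≤ (μ {ω | |b₁ * ε ω + b₂ * L ω| ≤ c}).toReal}
          ≤ sInf {c : ℝ | 0 ≤ c ∧
              1 - α ≤ (μ {ω | |c₁ * ε ω + c₂ * L ω| ≤ c}).toReal} :=
  statement17_general K hK a μ ε L hmε hmL hlawε hlawL hindep b₁ c₁ b₂ c₂ hb₁ h₁ hb₂ h₂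
end
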